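/- arXiv:2604.06443 — 4 statements merged into one kernel-verified Lean document; each statement's English description precedes it below -/
import Mathlib

section
/- With B(x) constructed by gluing the trees A(m_n(x)) (one per finite modification m_n(x) of x, with m_0 = id) to a new root, we have: for x, y ⊆ ℕ, x E₀ y (x and y differ on finitely many elements) if and only if the pointed trees (B(x), ∅) and (B(y), ∅) are bisimilar as transition systems with the immediate-successor relation. Consequently E₀ Borel-reduces to bisimilarity on well-founded countably-branching trees of rank ≤ ω+2. -/
/-- A tree over `N`: a set of finite sequences closed under initial segments. -/
def IsTree {N : Type} (T : Set (List N)) : Prop :=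
  ∀ s t : List N, t ∈ T → s <+: t → s ∈ T

/-- `treeRel T t s` : `t` is a proper extension of `s` lying in `T`. -/
def treeRel {N : Type} (T : Set (List N)) (t s : List N) : Prop :=
  t ∈ T ∧ s <+: t ∧ s ≠ t

/-- The rank `ρ_T(s)` of a node in the well-founded part of `T` (and `0` elsewhere). -/
noncomputable def nodeRank {N : Type} (T : Set (List N)) (s : List N) : Ordinal :=
  @dite _ (Acc (treeRel T) s) (Classical.dec _) (fun h => h.rank) (fun _ => 0)

/-- The rank of a tree, `ρ(T) = sup { ρ_T(s) + 1 | s ∈ T }`. -/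
noncomputable def treeRank {N : Type} (T : Set (List N)) : Ordinal :=
  ⨆ s : T, Order.succ (nodeRank T s)

/-- A tree is well-founded when it has no infinite branch. -/
def IsWFTree {N : Type} (T : Set (List N)) : Prop :=
  ¬ ∃ x : ℕ → N, ∀ k : ℕ, (List.range k).map x ∈ T

/-- Satisfaction of the formulas `ψ_α` (`ψ_0 = ⊤`, `ψ_{α+1} = ◇ψ_α`,
`ψ_λ = ⋀_{β<λ} ψ_β`) on a tree viewed as a transition system via immediate successors. -/
noncomputable def SatPsi {N : Type} (T : Set (List N)) (α : Ordinal) : List N → Prop :=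
  Ordinal.limitRecOn α (fun _ => True)
    (fun _ ih s => ∃ n : N, s ++ [n] ∈ T ∧ ih (s ++ [n]))
    (fun o _ ih s => ∀ β (hβ : β < o), ih β hβ s)
/-- Characteristic function of the tree `A(y)`. -/
def Afun (y : ℕ → Bool) : List ℕ → Bool
  | [] => true
  | k :: rest =>
      (decide (rest = List.replicate rest.length 0) && decide (rest.length ≤ k)) && y k

/-- Characteristic function of the tree `B(x)`. -/
def Bfun (m : ℕ → (ℕ → Bool) → (ℕ → Bool)) (x : ℕ → Bool) : List ℕ → Bool
  | [] => true
  | n :: s => Afun (m n x) s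

/-- The tree `B(x)` as a set. -/
def Bset (m : ℕ → (ℕ → Bool) → (ℕ → Bool)) (x : ℕ → Bool) : Set (List ℕ) :=
  {l | Bfun m x l = true}

/-- The immediate-successor transition relation of a tree. -/
def succRel {N : Type} (T : Set (List N)) (u v : List N) : Prop :=
  v ∈ T ∧ ∃ n : N, v = u ++ [n]

/-- `B` is a bisimulation between single-label transition systems. -/
def IsBisim {S S' : Type} (r : S → S → Prop) (r' : S' → S' → Prop)
    (B : S → S' → Prop) : Prop :=
  ∀ s s', B s s' →
    (∀ t, r s t → ∃ t', r' s' t' ∧ B t t') ∧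
    (∀ t', r' s' t' → ∃ t, r s t ∧ B t t')

/-- Bisimilarity of pointed transition systems. -/
def Bisimilar {S S' : Type} (r : S → S → Prop) (r' : S' → S' → Prop)
    (s : S) (s' : S') : Prop :=
  ∃ B, IsBisim r r' B ∧ B s s'

-- AUX

lemma Afun_cons {z : ℕ → Bool} {k : ℕ} {rest : List ℕ} :
    Afun z (k :: rest) = true ↔
      rest = List.replicate rest.length 0 ∧ rest.length ≤ k ∧ z k = true := by
  simp [Afun, Bool.and_eq_true, decide_eq_true_iff, and_assoc]

lemma mem_Bset {m x} {l : List ℕ} : l ∈ Bset m x ↔ Bfun m x l = true := Iff.rfl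

lemma Bfun_cons {m x} {n : ℕ} {s : List ℕ} : Bfun m x (n :: s) = Afun (m n x) s := rfl

lemma mem_Bset_cons {m x} {n : ℕ} {s : List ℕ} :
    (n :: s) ∈ Bset m x ↔ Afun (m n x) s = true := Iff.rfl

def CanStep {S : Type} (r : S → S → Prop) : ℕ → S → Prop
  | 0, _ => True
  | i+1, u => ∃ v, r u v ∧ CanStep r i v

lemma canStep_bisim {S S' : Type} {r : S → S → Prop} {r' : S' → S' → Prop} {R}
    (hb : IsBisim r r' R) : ∀ i u v, R u v → CanStep r i u → CanStep r' i v := by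
  intro i
  induction i with
  | zero => intro u v _ _; trivial
  | succ i ih =>
    rintro u v hR ⟨w, hw, hc⟩
    obtain ⟨w', hw', hR'⟩ := (hb u v hR).1 w hw
    exact ⟨w', hw', ih w w' hR' hc⟩

lemma IsBisim.symm {S S' : Type} {r : S → S → Prop} {r' : S' → S' → Prop} {R}
    (hb : IsBisim r r' R) : IsBisim r' r (fun v u => R u v) := by
  intro v u hR
  exact ⟨(hb u v hR).2, (hb u v hR).1⟩

lemma repl_app {j : ℕ} {a : ℕ} :
    List.replicate j 0 ++ [a] = List.replicate (j+1) (0:ℕ) ↔ a = 0 := by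
  rw [List.replicate_succ']
  constructor
  · intro h
    have := List.append_cancel_left h
    simpa using this
  · rintro rfl; rfl

lemma canStep_chain {m : ℕ → (ℕ → Bool) → (ℕ → Bool)} {w : ℕ → Bool} {n k : ℕ}
    (hk : m n w k = true) :
    ∀ i j, j ≤ k →
      (CanStep (succRel (Bset m w)) i (n :: k :: List.replicate j 0) ↔ j + i ≤ k) := by
  intro i
  induction i with
  | zero => intro j hj; simpa [CanStep] using hj
  | succ i ih =>
    intro j hj
    constructor
    · rintro ⟨v, ⟨hv, a, rfl⟩, hstep⟩
      have hv' : Afun (m n w) (k :: (List.replicate j 0 ++ [a])) = true := hv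
      rw [Afun_cons] at hv'
      obtain ⟨h1, h2, -⟩ := hv'
      simp only [List.length_append, List.length_replicate, List.length_singleton] at h1 h2
      have ha : a = 0 := repl_app.mp h1
      subst ha
      have : CanStep (succRel (Bset m w)) i (n :: k :: List.replicate (j+1) 0) := by
        have e : (n :: k :: List.replicate j 0) ++ [0] = n :: k :: List.replicate (j+1) (0:ℕ) := by
          simp [List.replicate_succ']
        rwa [e] at hstep
      have := (ih (j+1) h2).mp this
      omega
    · intro h
      have h2 : j + 1 ≤ k := by omega
      refine ⟨n :: k :: List.replicate (j+1) 0, ⟨?_, 0, ?_⟩, ?_⟩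
      · rw [mem_Bset_cons, Afun_cons]
        refine ⟨by simp, by simpa using h2, hk⟩
      · simp [List.replicate_succ']
      · exact (ih (j+1) h2).mpr (by omega)

lemma key_step {m : ℕ → (ℕ → Bool) → (ℕ → Bool)} {x y : ℕ → Bool} {R}
    (hbis : IsBisim (succRel (Bset m x)) (succRel (Bset m y)) R)
    {n n' : ℕ} (hR : R [n] [n']) (k : ℕ) (hk : m n x k = true) : m n' y k = true := by
  have hmem : (n :: [k]) ∈ Bset m x := by
    rw [mem_Bset_cons, Afun_cons]
    exact ⟨by simp, by simp, hk⟩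
  have hstep : succRel (Bset m x) [n] (n :: [k]) := ⟨hmem, k, rfl⟩
  obtain ⟨t', ⟨ht'mem, a, rfl⟩, hR'⟩ := (hbis _ _ hR).1 _ hstep
  have ha : Afun (m n' y) [a] = true := ht'mem
  rw [Afun_cons] at ha
  obtain ⟨-, -, hay⟩ := ha
  -- show a = k using CanStep
  have cx : ∀ i, CanStep (succRel (Bset m x)) i (n :: [k]) ↔ i ≤ k := by
    intro i
    have := canStep_chain (w := x) hk i 0 (Nat.zero_le _)
    simpa using this
  have cy : ∀ i, CanStep (succRel (Bset m y)) i ([n'] ++ [a]) ↔ i ≤ a := by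
    intro i
    have := canStep_chain (w := y) hay i 0 (Nat.zero_le _)
    simpa using this
  have h1 : k ≤ a := (cy k).mp (canStep_bisim hbis k _ _ hR' ((cx k).mpr le_rfl))
  have h2 : a ≤ k := (cx a).mp (canStep_bisim hbis.symm a _ _ hR' ((cy a).mpr le_rfl))
  have : a = k := le_antisymm h2 h1
  subst this
  exact hay

noncomputable def phi : List ℕ → Ordinal.{0}
  | [] => Ordinal.omega0 + 1
  | [_] => Ordinal.omega0
  | _ :: k :: l => ((k - l.length : ℕ) : Ordinal)

lemma omega0_lt_add_one : Ordinal.omega0 < Ordinal.omega0 + 1 :=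
  lt_add_of_pos_right _ zero_lt_one

lemma treeRel_phi {m : ℕ → (ℕ → Bool) → (ℕ → Bool)} {x : ℕ → Bool} :
    ∀ t s, treeRel (Bset m x) t s → phi t < phi s := by
  rintro t s ⟨htmem, hpre, hne⟩
  obtain ⟨u, rfl⟩ := hpre
  have hu : u ≠ [] := by rintro rfl; simp at hne
  match s, u, hu with
  | [], [c], _ =>
    simpa [phi] using omega0_lt_add_one
  | [], c :: d :: u, _ =>
    simp only [List.nil_append, phi]
    exact lt_trans (Ordinal.nat_lt_omega0 _) omega0_lt_add_one
  | [a], c :: u, _ =>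
    simp only [List.cons_append, List.nil_append, phi]
    exact Ordinal.nat_lt_omega0 _
  | a :: b :: l0, c :: u, _ =>
    have hm : Afun (m a x) (b :: (l0 ++ c :: u)) = true := htmem
    rw [Afun_cons] at hm
    obtain ⟨-, hlen, -⟩ := hm
    simp only [List.length_append, List.length_cons] at hlen
    simp only [List.cons_append, phi]
    have : b - (l0 ++ c :: u).length < b - l0.length := by
      simp only [List.length_append, List.length_cons]; omega
    exact_mod_cast this

lemma acc_Bset {m : ℕ → (ℕ → Bool) → (ℕ → Bool)} {x : ℕ → Bool} (s : List ℕ) :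
    Acc (treeRel (Bset m x)) s := by
  have hwf : WellFounded (treeRel (Bset m x)) := by
    apply Subrelation.wf (r := InvImage (· < ·) phi)
    · intro t u h
      exact treeRel_phi t u h
    · exact InvImage.wf phi Ordinal.lt_wf
  exact hwf.apply s

lemma rank_le_phi {α : Type} {r : α → α → Prop} (f : α → Ordinal)
    (hf : ∀ a b, r a b → f a < f b) : ∀ a (h : Acc r a), h.rank ≤ f a := by
  intro a h
  induction h with
  | intro a ha ih =>
    rw [Acc.rank_eq]
    apply Ordinal.iSup_le
    rintro ⟨b, hb⟩
    have h1 : (Acc.intro a ha).inv hb = ha b hb := rfl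
    calc Order.succ ((Acc.intro a ha).inv hb).rank
        ≤ Order.succ (f b) := by
          apply Order.succ_le_succ
          exact ih b hb
      _ ≤ f a := Order.succ_le_of_lt (hf b a hb)

lemma fwd {m : ℕ → (ℕ → Bool) → (ℕ → Bool)}
    (hmod : ∀ n x, {i | m n x i ≠ x i}.Finite)
    (hall : ∀ x y : ℕ → Bool, {i | x i ≠ y i}.Finite → ∃ n, m n x = y)
    {x y : ℕ → Bool} (hxy : {i | x i ≠ y i}.Finite) :
    Bisimilar (succRel (Bset m x)) (succRel (Bset m y)) [] [] := by
  refine ⟨fun u v => (u = [] ∧ v = []) ∨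
    ∃ n n' s, u = n :: s ∧ v = n' :: s ∧ Afun (m n x) s = true ∧ m n x = m n' y,
    ?_, Or.inl ⟨rfl, rfl⟩⟩
  rintro u v (⟨rfl, rfl⟩ | ⟨n, n', s, rfl, rfl, hs, heq⟩)
  · constructor
    · rintro t ⟨htmem, a, rfl⟩
      have hfin : {i | y i ≠ m a x i}.Finite := by
        apply Set.Finite.subset (hxy.union (hmod a x))
        intro i hi
        simp only [Set.mem_setOf_eq, Set.mem_union] at *
        by_contra hc
        push_neg at hc
        exact hi (by rw [hc.2, hc.1])
      obtain ⟨n', hn'⟩ := hall y (m a x) hfin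
      refine ⟨[n'], ⟨rfl, n', by simp⟩, Or.inr ⟨a, n', [], by simp, by simp, rfl, hn'.symm⟩⟩
    · rintro t' ⟨htmem', a, rfl⟩
      have hfin : {i | x i ≠ m a y i}.Finite := by
        apply Set.Finite.subset (hxy.union (hmod a y))
        intro i hi
        simp only [Set.mem_setOf_eq, Set.mem_union] at *
        by_contra hc
        push_neg at hc
        exact hi (by rw [hc.2, hc.1])
      obtain ⟨n, hn⟩ := hall x (m a y) hfin
      refine ⟨[n], ⟨rfl, n, by simp⟩, Or.inr ⟨n, a, [], by simp, by simp, rfl, hn⟩⟩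
  · constructor
    · rintro t ⟨htmem, a, rfl⟩
      have hmx : Afun (m n x) (s ++ [a]) = true := htmem
      refine ⟨(n' :: s) ++ [a], ⟨?_, a, rfl⟩,
        Or.inr ⟨n, n', s ++ [a], by simp, by simp, hmx, heq⟩⟩
      show Afun (m n' y) (s ++ [a]) = true
      rw [← heq]; exact hmx
    · rintro t' ⟨htmem', a, rfl⟩
      have hmy : Afun (m n' y) (s ++ [a]) = true := htmem'
      refine ⟨(n :: s) ++ [a], ⟨?_, a, rfl⟩,
        Or.inr ⟨n, n', s ++ [a], by simp, by simp, ?_, heq⟩⟩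
      · show Afun (m n x) (s ++ [a]) = true
        rw [heq]; exact hmy
      · rw [heq]; exact hmy

lemma back {m : ℕ → (ℕ → Bool) → (ℕ → Bool)} (hm0 : m 0 = id)
    (hmod : ∀ n x, {i | m n x i ≠ x i}.Finite) {x y : ℕ → Bool}
    (h : Bisimilar (succRel (Bset m x)) (succRel (Bset m y)) [] []) :
    {i | x i ≠ y i}.Finite := by
  obtain ⟨R, hbis, hR⟩ := h
  have hmem0 : ([0] : List ℕ) ∈ Bset m x := rfl
  have hstep : succRel (Bset m x) [] [0] := ⟨hmem0, 0, rfl⟩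
  obtain ⟨t', ⟨ht'mem, n', rfl⟩, hR'⟩ := (hbis _ _ hR).1 _ hstep
  have hR'' : R [0] [n'] := hR'
  have hx : ∀ k, x k = true → m n' y k = true := by
    intro k hk
    have h0 : m 0 x k = true := by rw [hm0]; exact hk
    exact key_step hbis hR'' k h0
  have hy : ∀ k, m n' y k = true → x k = true := by
    intro k hk
    have := key_step hbis.symm hR'' k hk
    rwa [hm0] at this
  have hxy : ∀ k, x k = m n' y k := by
    intro k
    cases hxk : x k with
    | true => exact (hx k hxk).symm
    | false =>
      cases hyk : m n' y k with
      | false => rfl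
      | true => exact absurd (hy k hyk) (by simp [hxk])
  apply Set.Finite.subset (hmod n' y)
  intro i hi
  simp only [Set.mem_setOf_eq] at *
  rwa [← hxy i]

lemma contB {m : ℕ → (ℕ → Bool) → (ℕ → Bool)} (hm : ∀ n, Continuous (m n)) :
    Continuous (fun x : ℕ → Bool => Bfun m x) := by
  apply continuous_pi
  intro l
  match l with
  | [] => exact continuous_const
  | [n] => exact continuous_const
  | n :: k :: rest =>
    have e : (fun x : ℕ → Bool => Bfun m x (n :: k :: rest)) =
        (fun b : Bool =>
          (decide (rest = List.replicate rest.length 0) && decide (rest.length ≤ k)) && b) ∘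
          (fun w : ℕ → Bool => w k) ∘ (m n) := rfl
    rw [e]
    exact Continuous.comp continuous_of_discreteTopology
      ((continuous_apply k).comp (hm n))

lemma range_map_two (f : ℕ → ℕ) (n : ℕ) :
    (List.range (n + 2)).map f = f 0 :: f 1 :: (List.range n).map (fun i => f (i + 2)) := by
  rw [show n + 2 = (n + 1) + 1 by rfl, List.range_succ_eq_map, List.range_succ_eq_map]
  simp [List.map_map, Function.comp]

lemma wfB {m : ℕ → (ℕ → Bool) → (ℕ → Bool)} {x : ℕ → Bool} : IsWFTree (Bset m x) := by
  rintro ⟨f, hf⟩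
  have h := hf (f 1 + 1 + 2)
  rw [range_map_two] at h
  have h' : Afun (m (f 0) x)
      (f 1 :: (List.range (f 1 + 1)).map (fun i => f (i + 2))) = true := h
  rw [Afun_cons] at h'
  obtain ⟨-, hlen, -⟩ := h'
  simp only [List.length_map, List.length_range] at hlen
  omega

lemma rankB {m : ℕ → (ℕ → Bool) → (ℕ → Bool)} {x : ℕ → Bool} :
    treeRank (Bset m x) ≤ Ordinal.omega0 + 2 := by
  apply Ordinal.iSup_le
  rintro ⟨s, hs⟩
  have hacc := acc_Bset (m := m) (x := x) s
  have h1 : nodeRank (Bset m x) s ≤ phi s := by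
    simp only [nodeRank]
    rw [dif_pos hacc]
    exact rank_le_phi phi (fun a b h => treeRel_phi a b h) s hacc
  have h2 : phi s ≤ Ordinal.omega0 + 1 := by
    match s with
    | [] => exact le_rfl
    | [n] => exact le_of_lt omega0_lt_add_one
    | a :: b :: l =>
      exact le_of_lt (lt_trans (Ordinal.nat_lt_omega0 _) omega0_lt_add_one)
  calc Order.succ (nodeRank (Bset m x) s)
      ≤ Order.succ (Ordinal.omega0 + 1) := Order.succ_le_succ (h1.trans h2)
    _ = Ordinal.omega0 + 2 := by
        rw [Order.succ_eq_add_one, add_assoc, one_add_one_eq_two]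

/-- given a continuous enumeration `(m n)` of all finite
modifications with `m 0 = id`, for all `x, y ⊆ ℕ` we have `x E₀ y` iff
`(B(x), ∅)` and `(B(y), ∅)` are bisimilar; consequently `B` is a continuous
(hence Borel) reduction of `E₀` to bisimilarity on well-founded countably
branching trees of rank `≤ ω + 2`. -/
theorem E0_reduces_to_bisim (m : ℕ → (ℕ → Bool) → (ℕ → Bool))
    (hm : ∀ n, Continuous (m n)) (hm0 : m 0 = id)
    (hmod : ∀ n x, {i | m n x i ≠ x i}.Finite)
    (hall : ∀ x y : ℕ → Bool, {i | x i ≠ y i}.Finite → ∃ n, m n x = y) :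
    (∀ x y : ℕ → Bool,
        {i | x i ≠ y i}.Finite ↔
          Bisimilar (succRel (Bset m x)) (succRel (Bset m y)) [] []) ∧
    Continuous (fun x : ℕ → Bool => Bfun m x) ∧
    (∀ x : ℕ → Bool,
        IsWFTree (Bset m x) ∧ treeRank (Bset m x) ≤ Ordinal.omega0 + 2) := by
  exact ⟨fun x y => ⟨fun h => fwd hmod hall h, fun h => back hm0 hmod h⟩,
    contB hm, fun x => ⟨wfB, rankB⟩⟩
end

section
/- Two image-countable labelled transition systems with pointed states are bisimilar if and only if their ω-expansions are isomorphic: (𝕊, s) ∼ (𝕊', s') iff (Tr_𝕊(s), {Suc^a}_{a∈L}) ≅ (Tr_{𝕊'}(s'), {Suc'^a}_{a∈L}). -/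
/-- `B` is a bisimulation between labelled transition systems. -/
def IsLBisim {S S' L : Type} (R : L → S → S → Prop) (R' : L → S' → S' → Prop)
    (B : S → S' → Prop) : Prop :=
  ∀ s s', B s s' → ∀ a : L,
    (∀ t, R a s t → ∃ t', R' a s' t' ∧ B t t') ∧
    (∀ t', R' a s' t' → ∃ t, R a s t ∧ B t t')

/-- Bisimilarity of pointed labelled transition systems. -/
def LBisimilar {S S' L : Type} (R : L → S → S → Prop) (R' : L → S' → S' → Prop)
    (s : S) (s' : S') : Prop :=
  ∃ B, IsLBisim R R' B ∧ B s s'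

/-- `ω`-indexed paths from `s`: `u = (s₁,a₁,n₁)⋯(s_m,a_m,n_m)` with
`s →^{a₁} s₁` and `s_i →^{a_{i+1}} s_{i+1}`. -/
def IsPath {S L : Type} (R : L → S → S → Prop) : S → List (S × L × ℕ) → Prop
  | _, [] => True
  | s, (t, a, _) :: rest => R a s t ∧ IsPath R t rest

/-- The `ω`-expansion tree `Tr_𝕊(s)` of all `ω`-indexed paths from `s`. -/
def ExpTree {S L : Type} (R : L → S → S → Prop) (s : S) : Set (List (S × L × ℕ)) :=
  {u | IsPath R s u}

/-- The successor relations `Suc^a` on a tree over `S × L × ℕ`: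
`u Suc^a v` iff `v = u ⌢ (t,a,n)`. -/
def SucRel {S L : Type} (a : L) (u v : List (S × L × ℕ)) : Prop :=
  ∃ (t : S) (n : ℕ), v = u ++ [(t, a, n)]

namespace BisimAux

variable {S S' L : Type}

def lastSt (s : S) : List (S × L × ℕ) → S
  | [] => s
  | (t, _, _) :: rest => lastSt t rest

theorem isPath_append {R : L → S → S → Prop} (s : S) (u : List (S × L × ℕ)) (t : S) (a : L) (n : ℕ) :
    IsPath R s (u ++ [(t, a, n)]) ↔ IsPath R s u ∧ R a (lastSt s u) t := by
  induction u generalizing s with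
  | nil => simp [IsPath, lastSt]
  | cons x rest ih =>
    obtain ⟨t0, a0, n0⟩ := x
    simp [IsPath, lastSt, ih, and_assoc]

theorem lastSt_append (s : S) (u : List (S × L × ℕ)) (t : S) (a : L) (n : ℕ) :
    lastSt s (u ++ [(t, a, n)]) = t := by
  induction u generalizing s with
  | nil => rfl
  | cons x rest ih => obtain ⟨t0, a0, n0⟩ := x; simpa [lastSt] using ih t0

theorem half_equiv {α Q : Type} [Countable Q] (π : Q → α) (hsurj : Function.Surjective π) :
    ∃ e : α × ℕ ≃ Q × ℕ, ∀ x, π (e x).1 = x.1 := by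
  have hfib : ∀ a : α, Nonempty (ℕ ≃ ({q // π q = a} × ℕ)) := by
    intro a
    haveI : Nonempty {q // π q = a} := let ⟨q, h⟩ := hsurj a; ⟨⟨q, h⟩⟩
    haveI : Countable {q // π q = a} := inferInstance
    obtain ⟨d⟩ := nonempty_denumerable ({q // π q = a} × ℕ)
    exact ⟨(Denumerable.eqv _).symm⟩
  let h : ∀ a : α, ℕ ≃ ({q // π q = a} × ℕ) := fun a => (hfib a).some
  refine ⟨((Equiv.sigmaEquivProd α ℕ).symm.trans
      ((Equiv.sigmaCongrRight h).trans
        ((Equiv.sigmaProdDistrib _ ℕ).symm.trans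
          ((Equiv.sigmaFiberEquiv π).prodCongr (Equiv.refl ℕ))))), ?_⟩
  rintro ⟨a, n⟩
  simp [Equiv.sigmaProdDistrib, Equiv.sigmaFiberEquiv]
  exact (h a n).1.2

theorem key_equiv {α β : Type} [Countable α] [Countable β] (P : α → β → Prop)
    (h1 : ∀ a, ∃ b, P a b) (h2 : ∀ b, ∃ a, P a b) :
    ∃ e : α × ℕ ≃ β × ℕ, ∀ x, P x.1 (e x).1 := by
  by_cases hα : Nonempty α
  · have s1 : Function.Surjective (fun q : {p : α × β // P p.1 p.2} => q.1.1) := by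
      intro a; obtain ⟨b, hb⟩ := h1 a; exact ⟨⟨(a, b), hb⟩, rfl⟩
    have s2 : Function.Surjective (fun q : {p : α × β // P p.1 p.2} => q.1.2) := by
      intro b; obtain ⟨a, ha⟩ := h2 b; exact ⟨⟨(a, b), ha⟩, rfl⟩
    obtain ⟨e1, he1⟩ := half_equiv _ s1
    obtain ⟨e2, he2⟩ := half_equiv _ s2
    refine ⟨e1.trans e2.symm, ?_⟩
    intro x
    have hx1 : (e1 x).1.1.1 = x.1 := he1 x
    have hx2 : (e1 x).1.1.2 = ((e1.trans e2.symm) x).1 := by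
      have := he2 (e2.symm (e1 x))
      simpa using this
    have := (e1 x).1.2
    rw [hx1, hx2] at this
    exact this
  · have hβ : IsEmpty β := ⟨fun b => hα ⟨(h2 b).choose⟩⟩
    haveI : IsEmpty α := not_nonempty_iff.mp hα
    exact ⟨Equiv.equivOfIsEmpty _ _, fun x => IsEmpty.elim inferInstance x.1⟩


section Maps

attribute [local instance] Classical.propDecidable

variable {S S' L : Type}
variable (R : L → S → S → Prop) (R' : L → S' → S' → Prop) (B : S → S' → Prop)

noncomputable def stepE (hB : IsLBisim R R' B)
    (hic : ∀ (a : L) (s : S), {t | R a s t}.Countable)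
    (hic' : ∀ (a : L) (s' : S'), {t | R' a s' t}.Countable)
    (p : S) (p' : S') (a : L) (h : B p p') :
    {e : {t // R a p t} × ℕ ≃ {t' // R' a p' t'} × ℕ // ∀ x, B x.1.1 (e x).1.1} := by
  haveI : Countable {t // R a p t} := (hic a p).to_subtype
  haveI : Countable {t' // R' a p' t'} := (hic' a p').to_subtype
  have h1 : ∀ t : {t // R a p t}, ∃ t' : {t' // R' a p' t'}, B t.1 t'.1 := by
    intro t
    obtain ⟨t', ht', hb⟩ := (hB p p' h a).1 t.1 t.2
    exact ⟨⟨t', ht'⟩, hb⟩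
  have h2 : ∀ t' : {t' // R' a p' t'}, ∃ t : {t // R a p t}, B t.1 t'.1 := by
    intro t'
    obtain ⟨t, ht, hb⟩ := (hB p p' h a).2 t'.1 t'.2
    exact ⟨⟨t, ht⟩, hb⟩
  exact ⟨(key_equiv _ h1 h2).choose, (key_equiv _ h1 h2).choose_spec⟩

variable (hB : IsLBisim R R' B)
variable (hic : ∀ (a : L) (s : S), {t | R a s t}.Countable)
variable (hic' : ∀ (a : L) (s' : S'), {t | R' a s' t}.Countable)

noncomputable def Fmap : List (S × L × ℕ) → S → S' → List (S' × L × ℕ)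
  | [], _, _ => []
  | (t, a, n) :: rest, p, p' =>
    if h : B p p' ∧ R a p t then
      ((((stepE R R' B hB hic hic' p p' a h.1).1 (⟨t, h.2⟩, n)).1.1 : S'), a,
        ((stepE R R' B hB hic hic' p p' a h.1).1 (⟨t, h.2⟩, n)).2) ::
        Fmap rest t ((stepE R R' B hB hic hic' p p' a h.1).1 (⟨t, h.2⟩, n)).1.1
    else []

noncomputable def Gmap : List (S' × L × ℕ) → S → S' → List (S × L × ℕ)
  | [], _, _ => []
  | (t', a, n') :: rest, p, p' =>
    if h : B p p' ∧ R' a p' t' then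
      ((((stepE R R' B hB hic hic' p p' a h.1).1.symm (⟨t', h.2⟩, n')).1.1 : S), a,
        ((stepE R R' B hB hic hic' p p' a h.1).1.symm (⟨t', h.2⟩, n')).2) ::
        Gmap rest ((stepE R R' B hB hic hic' p p' a h.1).1.symm (⟨t', h.2⟩, n')).1.1 t'
    else []

theorem Fmap_cons (t : S) (a : L) (n : ℕ) (rest : List (S × L × ℕ)) (p : S) (p' : S')
    (h : B p p') (ht : R a p t) :
    Fmap R R' B hB hic hic' ((t, a, n) :: rest) p p' =
      ((((stepE R R' B hB hic hic' p p' a h).1 (⟨t, ht⟩, n)).1.1 : S'), a,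
        ((stepE R R' B hB hic hic' p p' a h).1 (⟨t, ht⟩, n)).2) ::
        Fmap R R' B hB hic hic' rest t
          ((stepE R R' B hB hic hic' p p' a h).1 (⟨t, ht⟩, n)).1.1 := by
  rw [Fmap, dif_pos ⟨h, ht⟩]

theorem Gmap_cons (t' : S') (a : L) (n' : ℕ) (rest : List (S' × L × ℕ)) (p : S) (p' : S')
    (h : B p p') (ht' : R' a p' t') :
    Gmap R R' B hB hic hic' ((t', a, n') :: rest) p p' =
      ((((stepE R R' B hB hic hic' p p' a h).1.symm (⟨t', ht'⟩, n')).1.1 : S), a,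
        ((stepE R R' B hB hic hic' p p' a h).1.symm (⟨t', ht'⟩, n')).2) ::
        Gmap R R' B hB hic hic' rest
          ((stepE R R' B hB hic hic' p p' a h).1.symm (⟨t', ht'⟩, n')).1.1 t' := by
  rw [Gmap, dif_pos ⟨h, ht'⟩]

theorem stepE_symm_spec (p : S) (p' : S') (a : L) (h : B p p')
    (y : {t' // R' a p' t'} × ℕ) :
    B (((stepE R R' B hB hic hic' p p' a h).1.symm y).1 : S) (y.1 : S') := by
  have h2 := (stepE R R' B hB hic hic' p p' a h).2
      ((stepE R R' B hB hic hic' p p' a h).1.symm y)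
  rwa [Equiv.apply_symm_apply] at h2

theorem Fmap_spec : ∀ (u : List (S × L × ℕ)) (p : S) (p' : S'), B p p' → IsPath R p u →
    IsPath R' p' (Fmap R R' B hB hic hic' u p p') ∧
      B (lastSt p u) (lastSt p' (Fmap R R' B hB hic hic' u p p')) := by
  intro u
  induction u with
  | nil => intro p p' h _; exact ⟨trivial, h⟩
  | cons z rest ih =>
    obtain ⟨t, a, n⟩ := z
    intro p p' h hp
    obtain ⟨ht, hrest⟩ := hp
    rw [Fmap_cons R R' B hB hic hic' t a n rest p p' h ht]
    have hbt : B t ((stepE R R' B hB hic hic' p p' a h).1 (⟨t, ht⟩, n)).1.1 :=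
      (stepE R R' B hB hic hic' p p' a h).2 (⟨t, ht⟩, n)
    obtain ⟨h1, h2⟩ := ih t _ hbt hrest
    exact ⟨⟨((stepE R R' B hB hic hic' p p' a h).1 (⟨t, ht⟩, n)).1.2, h1⟩, h2⟩

theorem Gmap_spec : ∀ (v : List (S' × L × ℕ)) (p : S) (p' : S'), B p p' → IsPath R' p' v →
    IsPath R p (Gmap R R' B hB hic hic' v p p') ∧
      B (lastSt p (Gmap R R' B hB hic hic' v p p')) (lastSt p' v) := by
  intro v
  induction v with
  | nil => intro p p' h _; exact ⟨trivial, h⟩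
  | cons z rest ih =>
    obtain ⟨t', a, n'⟩ := z
    intro p p' h hp
    obtain ⟨ht', hrest⟩ := hp
    rw [Gmap_cons R R' B hB hic hic' t' a n' rest p p' h ht']
    have hbt : B ((stepE R R' B hB hic hic' p p' a h).1.symm (⟨t', ht'⟩, n')).1.1 t' :=
      stepE_symm_spec R R' B hB hic hic' p p' a h (⟨t', ht'⟩, n')
    obtain ⟨h1, h2⟩ := ih _ t' hbt hrest
    exact ⟨⟨((stepE R R' B hB hic hic' p p' a h).1.symm (⟨t', ht'⟩, n')).1.2, h1⟩, h2⟩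

theorem Gmap_Fmap : ∀ (u : List (S × L × ℕ)) (p : S) (p' : S'), B p p' → IsPath R p u →
    Gmap R R' B hB hic hic' (Fmap R R' B hB hic hic' u p p') p p' = u := by
  intro u
  induction u with
  | nil => intro p p' h _; rfl
  | cons z rest ih =>
    obtain ⟨t, a, n⟩ := z
    intro p p' h hp
    obtain ⟨ht, hrest⟩ := hp
    rw [Fmap_cons R R' B hB hic hic' t a n rest p p' h ht]
    set e := (stepE R R' B hB hic hic' p p' a h).1 with he
    set y := e (⟨t, ht⟩, n) with hy
    have hbt : B t y.1.1 := (stepE R R' B hB hic hic' p p' a h).2 (⟨t, ht⟩, n)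
    rw [Gmap_cons R R' B hB hic hic' y.1.1 a y.2 _ p p' h y.1.2]
    have hsymm : e.symm (⟨y.1.1, y.1.2⟩, y.2) = (⟨t, ht⟩, n) := by
      rw [show ((⟨y.1.1, y.1.2⟩ : {t' // R' a p' t'}), y.2) = y from rfl, hy,
        Equiv.symm_apply_apply]
    rw [← he, hsymm]
    exact congrArg _ (ih t y.1.1 hbt hrest)

theorem Fmap_Gmap : ∀ (v : List (S' × L × ℕ)) (p : S) (p' : S'), B p p' → IsPath R' p' v →
    Fmap R R' B hB hic hic' (Gmap R R' B hB hic hic' v p p') p p' = v := by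
  intro v
  induction v with
  | nil => intro p p' h _; rfl
  | cons z rest ih =>
    obtain ⟨t', a, n'⟩ := z
    intro p p' h hp
    obtain ⟨ht', hrest⟩ := hp
    rw [Gmap_cons R R' B hB hic hic' t' a n' rest p p' h ht']
    set e := (stepE R R' B hB hic hic' p p' a h).1 with he
    set x := e.symm (⟨t', ht'⟩, n') with hx
    have hbt : B x.1.1 t' := stepE_symm_spec R R' B hB hic hic' p p' a h (⟨t', ht'⟩, n')
    rw [Fmap_cons R R' B hB hic hic' x.1.1 a x.2 _ p p' h x.1.2]
    have happ : e (⟨x.1.1, x.1.2⟩, x.2) = (⟨t', ht'⟩, n') := by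
      rw [show ((⟨x.1.1, x.1.2⟩ : {t // R a p t}), x.2) = x from rfl, hx,
        Equiv.apply_symm_apply]
    rw [← he, happ]
    exact congrArg _ (ih x.1.1 t' hbt hrest)

theorem Fmap_append : ∀ (u : List (S × L × ℕ)) (p : S) (p' : S'), B p p' → IsPath R p u →
    ∀ (t : S) (a : L) (n : ℕ), R a (lastSt p u) t →
    ∃ (t' : S') (n' : ℕ), Fmap R R' B hB hic hic' (u ++ [(t, a, n)]) p p' =
      Fmap R R' B hB hic hic' u p p' ++ [(t', a, n')] := by
  intro u
  induction u with
  | nil =>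
    intro p p' h _ t a n ht
    exact ⟨_, _, by rw [List.nil_append, Fmap_cons R R' B hB hic hic' t a n [] p p' h ht]; rfl⟩
  | cons z rest ih =>
    obtain ⟨t0, a0, n0⟩ := z
    intro p p' h hp t a n ht
    obtain ⟨ht0, hrest⟩ := hp
    have hbt : B t0 ((stepE R R' B hB hic hic' p p' a0 h).1 (⟨t0, ht0⟩, n0)).1.1 :=
      (stepE R R' B hB hic hic' p p' a0 h).2 (⟨t0, ht0⟩, n0)
    obtain ⟨t', n', hrec⟩ := ih t0 _ hbt hrest t a n ht
    refine ⟨t', n', ?_⟩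
    rw [List.cons_append, Fmap_cons R R' B hB hic hic' t0 a0 n0 _ p p' h ht0,
      Fmap_cons R R' B hB hic hic' t0 a0 n0 rest p p' h ht0, hrec]
    rfl
  
theorem Gmap_append : ∀ (v : List (S' × L × ℕ)) (p : S) (p' : S'), B p p' → IsPath R' p' v →
    ∀ (t' : S') (a : L) (n' : ℕ), R' a (lastSt p' v) t' →
    ∃ (t : S) (n : ℕ), Gmap R R' B hB hic hic' (v ++ [(t', a, n')]) p p' =
      Gmap R R' B hB hic hic' v p p' ++ [(t, a, n)] := by
  intro v
  induction v with
  | nil =>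
    intro p p' h _ t' a n' ht'
    exact ⟨_, _, by rw [List.nil_append, Gmap_cons R R' B hB hic hic' t' a n' [] p p' h ht']; rfl⟩
  | cons z rest ih =>
    obtain ⟨s0, a0, n0⟩ := z
    intro p p' h hp t' a n' ht'
    obtain ⟨hs0, hrest⟩ := hp
    have hbt : B ((stepE R R' B hB hic hic' p p' a0 h).1.symm (⟨s0, hs0⟩, n0)).1.1 s0 :=
      stepE_symm_spec R R' B hB hic hic' p p' a0 h (⟨s0, hs0⟩, n0)
    obtain ⟨t, n, hrec⟩ := ih _ s0 hbt hrest t' a n' ht'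
    refine ⟨t, n, ?_⟩
    rw [List.cons_append, Gmap_cons R R' B hB hic hic' s0 a0 n0 _ p p' h hs0,
      Gmap_cons R R' B hB hic hic' s0 a0 n0 rest p p' h hs0, hrec]
    rfl

end Maps

end BisimAux

/-- two pointed image-countable LTSs are bisimilar iff their
`ω`-expansions are isomorphic as structures `(Tr_𝕊(s), {Suc^a}_{a∈L})`. -/
theorem bisimilar_iff_expansion_iso {S S' L : Type} [Countable L]
    (R : L → S → S → Prop) (R' : L → S' → S' → Prop)
    (hic : ∀ (a : L) (s : S), {t | R a s t}.Countable)
    (hic' : ∀ (a : L) (s' : S'), {t | R' a s' t}.Countable)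
    (s : S) (s' : S') :
    LBisimilar R R' s s' ↔
      ∃ f : {u // u ∈ ExpTree R s} ≃ {u // u ∈ ExpTree R' s'},
        ∀ (a : L) (u v : {u // u ∈ ExpTree R s}),
          SucRel a u.1 v.1 ↔ SucRel a (f u).1 (f v).1 := by
  open BisimAux in
  constructor
  · rintro ⟨B, hB, hBs⟩
    refine ⟨⟨fun u => ⟨Fmap R R' B hB hic hic' u.1 s s',
        (Fmap_spec R R' B hB hic hic' u.1 s s' hBs u.2).1⟩,
      fun v => ⟨Gmap R R' B hB hic hic' v.1 s s',
        (Gmap_spec R R' B hB hic hic' v.1 s s' hBs v.2).1⟩,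
      fun u => Subtype.ext (Gmap_Fmap R R' B hB hic hic' u.1 s s' hBs u.2),
      fun v => Subtype.ext (Fmap_Gmap R R' B hB hic hic' v.1 s s' hBs v.2)⟩, ?_⟩
    intro a u v
    show SucRel a u.1 v.1 ↔ SucRel a (Fmap R R' B hB hic hic' u.1 s s')
      (Fmap R R' B hB hic hic' v.1 s s')
    constructor
    · rintro ⟨t, n, hv⟩
      have hv2 : IsPath R s (u.1 ++ [(t, a, n)]) := by rw [← hv]; exact v.2
      rw [isPath_append] at hv2
      obtain ⟨t', n', heq⟩ := Fmap_append R R' B hB hic hic' u.1 s s' hBs u.2 t a n hv2.2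
      exact ⟨t', n', by rw [hv, heq]⟩
    · rintro ⟨t', n', heq⟩
      have hFu : IsPath R' s' (Fmap R R' B hB hic hic' u.1 s s') :=
        (Fmap_spec R R' B hB hic hic' u.1 s s' hBs u.2).1
      have hFv : IsPath R' s' (Fmap R R' B hB hic hic' u.1 s s' ++ [(t', a, n')]) := by
        rw [← heq]; exact (Fmap_spec R R' B hB hic hic' v.1 s s' hBs v.2).1
      rw [isPath_append] at hFv
      obtain ⟨t, n, hgeq⟩ :=
        Gmap_append R R' B hB hic hic' _ s s' hBs hFu t' a n' hFv.2
      rw [← heq, Gmap_Fmap R R' B hB hic hic' v.1 s s' hBs v.2,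
        Gmap_Fmap R R' B hB hic hic' u.1 s s' hBs u.2] at hgeq
      exact ⟨t, n, hgeq⟩
  · rintro ⟨f, hf⟩
    have hroot : f ⟨[], trivial⟩ = ⟨[], trivial⟩ := by
      rcases List.eq_nil_or_concat (f ⟨[], trivial⟩).1 with hnil | ⟨u0, z, hw⟩
      · exact Subtype.ext hnil
      · exfalso
        obtain ⟨t', a, n'⟩ := z
        rw [List.concat_eq_append] at hw
        have hw2 : IsPath R' s' (u0 ++ [(t', a, n')]) := by
          rw [← hw]; exact (f ⟨[], trivial⟩).2
        rw [isPath_append] at hw2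
        have hu0 : u0 ∈ ExpTree R' s' := hw2.1
        have hsuc : SucRel a (f (f.symm ⟨u0, hu0⟩)).1 (f (f.symm (f ⟨[], trivial⟩))).1 := by
          rw [f.apply_symm_apply, f.apply_symm_apply]
          exact ⟨t', n', hw⟩
        have := (hf a (f.symm ⟨u0, hu0⟩) (f.symm (f ⟨[], trivial⟩))).mpr hsuc
        rw [f.symm_apply_apply] at this
        obtain ⟨t, n, habs⟩ := this
        exact List.cons_ne_nil _ _ (List.append_eq_nil_iff.mp habs.symm).2
    refine ⟨fun p p' => ∃ (u : List (S × L × ℕ)) (hu : u ∈ ExpTree R s),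
      lastSt s u = p ∧ lastSt s' (f ⟨u, hu⟩).1 = p', ?_, ⟨[], trivial, rfl, by rw [hroot]; rfl⟩⟩
    rintro p p' ⟨u, hu, hlast, hlast'⟩ a
    constructor
    · intro t ht
      have hv : (u ++ [(t, a, 0)]) ∈ ExpTree R s := by
        show IsPath R s _
        rw [isPath_append]
        exact ⟨hu, by rw [hlast]; exact ht⟩
      obtain ⟨t', n', heq⟩ := (hf a ⟨u, hu⟩ ⟨u ++ [(t, a, 0)], hv⟩).mp ⟨t, 0, rfl⟩
      have hpath' : IsPath R' s' ((f ⟨u, hu⟩).1 ++ [(t', a, n')]) := by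
        rw [← heq]; exact (f ⟨u ++ [(t, a, 0)], hv⟩).2
      rw [isPath_append] at hpath'
      refine ⟨t', by rw [← hlast']; exact hpath'.2, u ++ [(t, a, 0)], hv,
        lastSt_append s u t a 0, ?_⟩
      rw [heq]
      exact lastSt_append s' _ t' a n'
    · intro t' ht'
      have hw : ((f ⟨u, hu⟩).1 ++ [(t', a, 0)]) ∈ ExpTree R' s' := by
        show IsPath R' s' _
        rw [isPath_append]
        exact ⟨(f ⟨u, hu⟩).2, by rw [hlast']; exact ht'⟩
      have hsuc : SucRel a (f ⟨u, hu⟩).1 (f (f.symm ⟨_, hw⟩)).1 := by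
        rw [f.apply_symm_apply]
        exact ⟨t', 0, rfl⟩
      obtain ⟨t, n, hveq⟩ := (hf a ⟨u, hu⟩ (f.symm ⟨_, hw⟩)).mpr hsuc
      have hvpath : IsPath R s (u ++ [(t, a, n)]) := by
        rw [← hveq]; exact (f.symm ⟨_, hw⟩).2
      rw [isPath_append] at hvpath
      refine ⟨t, by rw [← hlast]; exact hvpath.2, (f.symm ⟨_, hw⟩).1, (f.symm ⟨_, hw⟩).2, ?_, ?_⟩
      · rw [hveq]; exact lastSt_append s u t a n
      · rw [show (⟨(f.symm ⟨_, hw⟩).1, (f.symm ⟨_, hw⟩).2⟩ : {u // u ∈ ExpTree R s})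
            = f.symm ⟨_, hw⟩ from rfl, f.apply_symm_apply]
        exact lastSt_append s' _ t' a 0
end

section
/- Let 𝕊 be an LTS with countable label set L and let s ∈ S. Define φ_0 = ⊤, φ_{α+1} = ⋁_{a∈L} ⟨a⟩φ_α, and φ_λ = ⋀_{α<λ} φ_α for limit λ. Then (𝕊, s) ⊨ φ_α if and only if (Tr_𝕊(s), {→^⋆}) with root ∅ satisfies ψ_α, where ψ_0 = ⊤, ψ_{α+1} = ◇ψ_α, ψ_λ = ⋀_{α<λ}ψ_α, and Tr_𝕊(s) is the ω-expansion tree at s with immediate-successor transition. -/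
/-- Satisfaction of the formulas `φ_α` (`φ_0 = ⊤`, `φ_{α+1} = ⋁_{a∈L} ⟨a⟩φ_α`,
`φ_λ = ⋀_{β<λ} φ_β`) on a labelled transition system. -/
noncomputable def SatPhi {S L : Type} (R : L → S → S → Prop) (α : Ordinal) : S → Prop :=
  Ordinal.limitRecOn α (fun _ => True)
    (fun _ ih s => ∃ (a : L) (t : S), R a s t ∧ ih t)
    (fun o _ ih s => ∀ β (hβ : β < o), ih β hβ s)


/-! The relation "`s` is the last state of the path `u`" is a bisimulation between
`𝕊` with all labels forgotten and the expansion tree with its child relation. Both families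
`φ_α` and `ψ_α` only test the existence of some successor, iterated transfinitely, so they
agree on related points by induction on `α`. -/

section SatPhi

variable {S L : Type} (R : L → S → S → Prop) (s : S)

@[simp]
theorem satPhi_zero : SatPhi R 0 s := by
  simp [SatPhi, Ordinal.limitRecOn_zero]

theorem satPhi_add_one (α : Ordinal) :
    SatPhi R (α + 1) s ↔ ∃ (a : L) (t : S), R a s t ∧ SatPhi R α t := by
  simp only [SatPhi, Ordinal.limitRecOn_add_one]

theorem satPhi_limit {o : Ordinal} (ho : Order.IsSuccLimit o) :
    SatPhi R o s ↔ ∀ β < o, SatPhi R β s := by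
  simp only [SatPhi, Ordinal.limitRecOn_limit _ _ _ _ ho]

end SatPhi

section SatPsi

variable {N : Type} (T : Set (List N)) (u : List N)

@[simp]
theorem satPsi_zero : SatPsi T 0 u := by
  simp [SatPsi, Ordinal.limitRecOn_zero]

theorem satPsi_add_one (α : Ordinal) :
    SatPsi T (α + 1) u ↔ ∃ n : N, u ++ [n] ∈ T ∧ SatPsi T α (u ++ [n]) := by
  simp only [SatPsi, Ordinal.limitRecOn_add_one]

theorem satPsi_limit {o : Ordinal} (ho : Order.IsSuccLimit o) :
    SatPsi T o u ↔ ∀ β < o, SatPsi T β u := by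
  simp only [SatPsi, Ordinal.limitRecOn_limit _ _ _ _ ho]

end SatPsi

theorem satPhi_iff_satPsi_of_forth_back {S L N : Type} {R : L → S → S → Prop}
    {T : Set (List N)} (B : S → List N → Prop)
    (forth : ∀ s u a t, B s u → R a s t → ∃ n, u ++ [n] ∈ T ∧ B t (u ++ [n]))
    (back : ∀ s u n, B s u → u ++ [n] ∈ T → ∃ a t, R a s t ∧ B t (u ++ [n]))
    (α : Ordinal) {s : S} {u : List N} (hsu : B s u) :
    SatPhi R α s ↔ SatPsi T α u := by
  induction α using Ordinal.limitRecOn generalizing s u with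
  | zero => simp
  | add_one α ih =>
    rw [satPhi_add_one, satPsi_add_one]
    constructor
    · rintro ⟨a, t, hst, ht⟩
      obtain ⟨n, hmem, htu⟩ := forth s u a t hsu hst
      exact ⟨n, hmem, (ih htu).1 ht⟩
    · rintro ⟨n, hmem, hun⟩
      obtain ⟨a, t, hst, htu⟩ := back s u n hsu hmem
      exact ⟨a, t, hst, (ih htu).2 hun⟩
  | limit o ho ih =>
    rw [satPhi_limit R s ho, satPsi_limit T u ho]
    exact forall₂_congr fun β hβ => ih β hβ hsu

def pathEnd {S L : Type} (s : S) (u : List (S × L × ℕ)) : S :=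
  ((u.getLast?).map Prod.fst).getD s

@[simp]
theorem pathEnd_nil {S L : Type} (s : S) : pathEnd s ([] : List (S × L × ℕ)) = s := rfl

@[simp]
theorem pathEnd_append_singleton {S L : Type} (s : S) (u : List (S × L × ℕ)) (x : S × L × ℕ) :
    pathEnd s (u ++ [x]) = x.1 := by
  simp [pathEnd]

@[simp]
theorem pathEnd_cons {S L : Type} (s : S) (x : S × L × ℕ) (u : List (S × L × ℕ)) :
    pathEnd s (x :: u) = pathEnd x.1 u := by
  cases u using List.reverseRecOn with
  | nil => rfl
  | append_singleton u y => rw [← List.cons_append, pathEnd_append_singleton,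
      pathEnd_append_singleton]

theorem isPath_append_singleton {S L : Type} (R : L → S → S → Prop) (s t : S) (a : L) (n : ℕ)
    (u : List (S × L × ℕ)) :
    IsPath R s (u ++ [(t, a, n)]) ↔ IsPath R s u ∧ R a (pathEnd s u) t := by
  induction u generalizing s with
  | nil => simp [IsPath]
  | cons x u ih =>
    obtain ⟨s', a', n'⟩ := x
    simp only [List.cons_append, IsPath, ih, pathEnd_cons, and_assoc]

theorem satPhi_iff_satPsi_expansion_general {S L : Type}
    (R : L → S → S → Prop) (s : S) (α : Ordinal) :
    SatPhi R α s ↔ SatPsi (ExpTree R s) α [] := by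
  refine satPhi_iff_satPsi_of_forth_back (fun t u => u ∈ ExpTree R s ∧ pathEnd s u = t)
    ?_ ?_ α ⟨trivial, rfl⟩
  · rintro _ u a t ⟨hu, rfl⟩ hst
    have hmem : u ++ [(t, a, 0)] ∈ ExpTree R s := (isPath_append_singleton R s t a 0 u).2 ⟨hu, hst⟩
    exact ⟨(t, a, 0), hmem, hmem, by simp⟩
  · rintro _ u ⟨t, a, n⟩ ⟨-, rfl⟩ hmem
    exact ⟨a, t, ((isPath_append_singleton R s t a n u).1 hmem).2, hmem, by simp⟩

/-- `(𝕊, s) ⊨ φ_α` iff the `ω`-expansion tree `Tr_𝕊(s)`, viewed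
as a transition system with the immediate-successor relation and root `∅`,
satisfies `ψ_α`. -/
theorem satPhi_iff_satPsi_expansion {S L : Type} [Countable L]
    (R : L → S → S → Prop) (s : S) (α : Ordinal) :
    SatPhi R α s ↔ SatPsi (ExpTree R s) α [] :=
  satPhi_iff_satPsi_expansion_general R s α
end

section
/- For ordinals α ≥ 2 and trees T, T' over M of rank exactly α, T ≡_α T' (i.e., (T, {Suc_a(T)}_a) ≅ (T', {Suc_a(T')}_a)) if and only if for every k ≥ 1 both the back and forth conditions hold: for every injective k-tuple u of elements of M with all (u_i) ∈ T, there is an injective k-tuple u' with all (u'_i) ∈ T', matching labels π₂(u_i) = π₂(u'_i), and for each i some β < α with T_{(u_i)} ≡_β T'_{(u'_i)}; and symmetrically starting from T'. -/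
/-- The successor relations `Suc_a(T)` on a tree over `M = ℕ × L × ℕ`:
`(u, v) ∈ Suc_a(T)` iff `u, v ∈ T` and `v = u ⌢ (x)` for some `x ∈ M` with
`π₂ x = a`. -/
def SucA {L : Type} (a : L) (u v : List (ℕ × L × ℕ)) : Prop :=
  ∃ x : ℕ × L × ℕ, x.2.1 = a ∧ v = u ++ [x]

/-- Isomorphism of the first-order structures `(T, {Suc_a(T)}_a)` and
`(T', {Suc_a(T')}_a)`. -/
def TreeIso {L : Type} (T T' : Set (List (ℕ × L × ℕ))) : Prop :=
  ∃ f : {u // u ∈ T} ≃ {u // u ∈ T'},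
    ∀ (a : L) (u v : {u // u ∈ T}), SucA a u.1 v.1 ↔ SucA a (f u).1 (f v).1

/-- `T ≡_α T'`: both trees are well founded of rank exactly `α` and their
structures are isomorphic. -/
def EquivA {L : Type} (α : Ordinal) (T T' : Set (List (ℕ × L × ℕ))) : Prop :=
  IsWFTree T ∧ IsWFTree T' ∧ treeRank T = α ∧ treeRank T' = α ∧ TreeIso T T'

/-- The section tree `T_{(x)}`. -/
def sect {N : Type} (T : Set (List N)) (x : N) : Set (List N) :=
  {t | x :: t ∈ T}

/-- The condition `forth^α_k(T, T')`. -/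
def Forth {L : Type} (α : Ordinal) (k : ℕ) (T T' : Set (List (ℕ × L × ℕ))) : Prop :=
  (IsWFTree T ∧ treeRank T = α) ∧
    ∀ u : Fin k → ℕ × L × ℕ, Function.Injective u → (∀ i, [u i] ∈ T) →
      ∃ u' : Fin k → ℕ × L × ℕ, Function.Injective u' ∧ (∀ i, [u' i] ∈ T') ∧
        (∀ i, (u i).2.1 = (u' i).2.1) ∧
        ∀ i, ∃ β < α, EquivA β (sect T (u i)) (sect T' (u' i))

/-- The condition `back^α_k(T, T')`. -/
def Back {L : Type} (α : Ordinal) (k : ℕ) (T T' : Set (List (ℕ × L × ℕ))) : Prop :=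
  (IsWFTree T' ∧ treeRank T' = α) ∧
    ∀ u' : Fin k → ℕ × L × ℕ, Function.Injective u' → (∀ i, [u' i] ∈ T') →
      ∃ u : Fin k → ℕ × L × ℕ, Function.Injective u ∧ (∀ i, [u i] ∈ T) ∧
        (∀ i, (u i).2.1 = (u' i).2.1) ∧
        ∀ i, ∃ β < α, EquivA β (sect T (u i)) (sect T' (u' i))

section TreeLemmas

variable {N : Type}

lemma IsTree.nil_mem {T : Set (List N)} (hT : IsTree T) {s : List N} (hs : s ∈ T) : [] ∈ T :=
  hT [] s hs (List.nil_prefix)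

lemma take_stable {l₁ l₂ : List N} (h : l₁ <+: l₂) {k : ℕ} (hk : k ≤ l₁.length) :
    l₂.take k = l₁.take k := by
  obtain ⟨r, rfl⟩ := h
  rw [List.take_append_of_le_length hk]

lemma treeRel_acc {T : Set (List N)} (hT : IsTree T) (hW : IsWFTree T) (s : List N) :
    Acc (treeRel T) s := by
  by_contra hs
  have step : ∀ t : List N, ¬ Acc (treeRel T) t →
      ∃ t', treeRel T t' t ∧ ¬ Acc (treeRel T) t' := by
    intro t ht
    by_contra hc
    push_neg at hc
    exact ht (Acc.intro t fun t' h => hc t' h)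
  let f : ℕ → {t : List N // ¬ Acc (treeRel T) t} :=
    fun n => Nat.rec ⟨s, hs⟩
      (fun _ p => ⟨(step p.1 p.2).choose, (step p.1 p.2).choose_spec.2⟩) n
  have hrel : ∀ n, treeRel T (f (n + 1)).1 (f n).1 :=
    fun n => (step (f n).1 (f n).2).choose_spec.1
  have hmem : ∀ n, (f (n + 1)).1 ∈ T := fun n => (hrel n).1
  have hpref : ∀ n, (f n).1 <+: (f (n + 1)).1 := fun n => (hrel n).2.1
  have hlt : ∀ n, (f n).1.length < (f (n + 1)).1.length := by
    intro n
    rcases lt_or_eq_of_le (hpref n).length_le with h | h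
    · exact h
    · exact absurd ((hpref n).eq_of_length h) (hrel n).2.2
  have hlen : ∀ n, n ≤ (f n).1.length := by
    intro n
    induction n with
    | zero => exact Nat.zero_le _
    | succ n ih => exact Nat.succ_le_of_lt (lt_of_le_of_lt ih (hlt n))
  have hne : (f 1).1 ≠ [] := by
    intro h
    have := hlen 1
    rw [h] at this
    simp at this
  classical
  set d : N := (f 1).1.head hne with hd
  set x : ℕ → N := fun k => (f (k + 1)).1.getD k d with hx
  have key : ∀ k, (List.range k).map x = (f k).1.take k := by
    intro k
    induction k with
    | zero => simp
    | succ k ih =>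
      rw [List.range_succ, List.map_append, ih, List.map_singleton]
      have h1 : (f (k + 1)).1.take k = (f k).1.take k := take_stable (hpref k) (hlen k)
      have h2 : k < (f (k + 1)).1.length := lt_of_lt_of_le (Nat.lt_succ_self k) (hlen (k + 1))
      rw [← h1, List.take_succ]
      congr 1
      simp [hx, List.getD_eq_getElem?_getD, List.getElem?_eq_getElem h2]
  apply hW
  refine ⟨x, fun k => ?_⟩
  rw [key k, ← take_stable (hpref k) (hlen k)]
  exact hT _ _ (hmem k) (List.take_prefix _ _)

lemma nodeRank_eq_rank {T : Set (List N)} {s : List N} (h : Acc (treeRel T) s) :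
    nodeRank T s = h.rank := dif_pos h

lemma nodeRank_lt {T : Set (List N)} (hT : IsTree T) (hW : IsWFTree T) {t s : List N}
    (h : treeRel T t s) : nodeRank T t < nodeRank T s := by
  rw [nodeRank_eq_rank (treeRel_acc hT hW t), nodeRank_eq_rank (treeRel_acc hT hW s)]
  exact Acc.rank_lt_of_rel (treeRel_acc hT hW s) h

lemma nodeRank_rel_eq {T : Set (List N)} {s : List N} (h : Acc (treeRel T) s) :
    nodeRank T s = ⨆ t : {t // treeRel T t s}, Order.succ (nodeRank T t.1) := by
  rw [nodeRank_eq_rank h, Acc.rank_eq]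
  congr 1
  funext t
  rw [nodeRank_eq_rank (h.inv t.2)]

lemma nodeRank_children {T : Set (List N)} (hT : IsTree T) (hW : IsWFTree T) (s : List N) :
    nodeRank T s = ⨆ z : {z : N // s ++ [z] ∈ T}, Order.succ (nodeRank T (s ++ [z.1])) := by
  rw [nodeRank_rel_eq (treeRel_acc hT hW s)]
  apply le_antisymm
  · apply Ordinal.iSup_le
    rintro ⟨t, ht, ⟨r, rfl⟩, hne⟩
    cases r with
    | nil => simp at hne
    | cons z r' =>
      have hmem : s ++ [z] ∈ T := hT _ _ ht ⟨r', by simp⟩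
      have hle : Order.succ (nodeRank T (s ++ z :: r')) ≤ Order.succ (nodeRank T (s ++ [z])) := by
        rcases eq_or_ne r' [] with rfl | hr
        · simp
        · apply Order.succ_le_succ
          apply le_of_lt
          refine nodeRank_lt hT hW ⟨ht, ⟨r', by simp⟩, ?_⟩
          intro hcon
          apply hr
          have h2 := List.append_cancel_left hcon
          injection h2 with _ h3
          exact h3.symm
      exact hle.trans (Ordinal.le_iSup
        (fun z : {z : N // s ++ [z] ∈ T} => Order.succ (nodeRank T (s ++ [z.1]))) ⟨z, hmem⟩)
  · apply Ordinal.iSup_le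
    rintro ⟨z, hz⟩
    exact Ordinal.le_iSup (fun t : {t // treeRel T t s} => Order.succ (nodeRank T t.1))
      ⟨s ++ [z], hz, ⟨[z], rfl⟩, by simp⟩

lemma succ_nodeRank_le_treeRank {T : Set (List N)} {s : List N} (hs : s ∈ T) :
    Order.succ (nodeRank T s) ≤ treeRank T :=
  Ordinal.le_iSup (fun t : T => Order.succ (nodeRank T t.1)) ⟨s, hs⟩

lemma nodeRank_le_nil {T : Set (List N)} (hT : IsTree T) (hW : IsWFTree T) {s : List N}
    (hs : s ∈ T) : nodeRank T s ≤ nodeRank T [] := by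
  rcases eq_or_ne s [] with rfl | h
  · exact le_rfl
  · exact le_of_lt (nodeRank_lt hT hW ⟨hs, List.nil_prefix, Ne.symm h⟩)

lemma treeRank_eq_succ {T : Set (List N)} (hT : IsTree T) (hW : IsWFTree T) (h0 : [] ∈ T) :
    treeRank T = Order.succ (nodeRank T []) :=
  le_antisymm (Ordinal.iSup_le fun s => Order.succ_le_succ (nodeRank_le_nil hT hW s.2))
    (succ_nodeRank_le_treeRank h0)

lemma nil_mem_of_treeRank_ne_zero {T : Set (List N)} (hT : IsTree T) (h : treeRank T ≠ 0) :
    [] ∈ T := by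
  by_contra h0
  apply h
  have hE : IsEmpty T := by
    constructor
    rintro ⟨s, hs⟩
    exact h0 (hT.nil_mem hs)
  rw [treeRank, ciSup_of_empty]
  rfl

lemma isTree_sect {T : Set (List N)} (hT : IsTree T) (x : N) : IsTree (sect T x) :=
  fun s t ht hst => hT (x :: s) (x :: t) ht (List.cons_prefix_cons.mpr ⟨rfl, hst⟩)

lemma isWFTree_sect {T : Set (List N)} (hT : IsTree T) (hW : IsWFTree T) (x : N) :
    IsWFTree (sect T x) := by
  rintro ⟨b, hb⟩
  apply hW
  refine ⟨fun n => Nat.casesOn n x b, fun k => ?_⟩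
  cases k with
  | zero => simpa using hT.nil_mem (hb 0)
  | succ k =>
    have h : (List.range (k + 1)).map (fun n => Nat.casesOn n x b : ℕ → N)
        = x :: (List.range k).map b := by
      rw [List.range_succ_eq_map]
      simp [Function.comp]
    rw [h]
    exact hb k

lemma nodeRank_sect {T : Set (List N)} (hT : IsTree T) (hW : IsWFTree T) (x : N) (t : List N) :
    nodeRank (sect T x) t = nodeRank T (x :: t) := by
  have H : ∀ s : List N, Acc (treeRel T) s →
      ∀ t, s = x :: t → nodeRank (sect T x) t = nodeRank T (x :: t) := by
    intro s hacc
    induction hacc with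
    | intro s _ ih =>
      rintro t rfl
      rw [nodeRank_children (isTree_sect hT x) (isWFTree_sect hT hW x) t,
        nodeRank_children hT hW (x :: t)]
      apply le_antisymm
      · apply Ordinal.iSup_le
        intro z
        have hmem : (x :: t) ++ [z.1] ∈ T := z.2
        have hrel : treeRel T ((x :: t) ++ [z.1]) (x :: t) := ⟨hmem, ⟨[z.1], rfl⟩, by simp⟩
        have heq := ih _ hrel (t ++ [z.1]) rfl
        refine le_trans (le_of_eq ?_) (Ordinal.le_iSup
          (fun z : {z // (x :: t) ++ [z] ∈ T} => Order.succ (nodeRank T ((x :: t) ++ [z.1])))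
          ⟨z.1, hmem⟩)
        rw [heq]
        rfl
      · apply Ordinal.iSup_le
        intro z
        have heq := ih _ ⟨z.2, ⟨[z.1], rfl⟩, by simp⟩ (t ++ [z.1]) rfl
        refine le_trans (le_of_eq ?_) (Ordinal.le_iSup
          (fun z : {z // t ++ [z] ∈ sect T x} =>
            Order.succ (nodeRank (sect T x) (t ++ [z.1]))) ⟨z.1, z.2⟩)
        show Order.succ (nodeRank T (x :: (t ++ [z.1]))) = _
        rw [← heq]
  exact H (x :: t) (treeRel_acc hT hW (x :: t)) t rfl

lemma treeRank_sect_lt {T : Set (List N)} (hT : IsTree T) (hW : IsWFTree T) {x : N}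
    (hx : [x] ∈ T) : treeRank (sect T x) < treeRank T := by
  have h0 : [] ∈ sect T x := hx
  rw [treeRank_eq_succ (isTree_sect hT x) (isWFTree_sect hT hW x) h0,
    treeRank_eq_succ hT hW (hT.nil_mem hx), nodeRank_sect hT hW x]
  exact Order.succ_lt_succ (nodeRank_lt hT hW ⟨hx, List.nil_prefix, by simp⟩)

end TreeLemmas

section IsoLemmas

variable {L : Type}

def SucPres {A B : Set (List (ℕ × L × ℕ))} (f : {u // u ∈ A} ≃ {u // u ∈ B}) : Prop :=
  ∀ (a : L) (u v : {u // u ∈ A}), SucA a u.1 v.1 ↔ SucA a (f u).1 (f v).1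

lemma sucA_cons_cons {a : L} {x y : ℕ × L × ℕ} {s t : List (ℕ × L × ℕ)} :
    SucA a (x :: s) (y :: t) ↔ y = x ∧ SucA a s t := by
  constructor
  · rintro ⟨z, hz, h⟩
    rw [List.cons_append] at h
    injection h with h1 h2
    exact ⟨h1, z, hz, h2⟩
  · rintro ⟨rfl, z, hz, rfl⟩
    exact ⟨z, hz, rfl⟩

lemma not_sucA_nil {a : L} {s : List (ℕ × L × ℕ)} : ¬ SucA a s [] := by
  rintro ⟨z, _, h⟩
  simp at h

lemma sucA_nil_cons {a : L} {y : ℕ × L × ℕ} {t : List (ℕ × L × ℕ)} :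
    SucA a [] (y :: t) ↔ y.2.1 = a ∧ t = [] := by
  constructor
  · rintro ⟨z, hz, h⟩
    rw [List.nil_append] at h
    injection h with h1 h2
    subst h1
    exact ⟨hz, h2⟩
  · rintro ⟨h1, rfl⟩
    exact ⟨y, h1, rfl⟩

variable {T T' : Set (List (ℕ × L × ℕ))}

lemma sucPres_symm (f : {u // u ∈ T} ≃ {u // u ∈ T'}) (hf : SucPres f) : SucPres f.symm := by
  intro a u v
  refine ((hf a (f.symm u) (f.symm v)).trans ?_).symm
  rw [f.apply_symm_apply, f.apply_symm_apply]

lemma treeIso_refl : TreeIso T T := ⟨Equiv.refl _, fun _ _ _ => Iff.rfl⟩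

lemma treeIso_symm (h : TreeIso T T') : TreeIso T' T := by
  obtain ⟨f, hf⟩ := h
  exact ⟨f.symm, sucPres_symm f hf⟩

lemma treeIso_trans {T'' : Set (List (ℕ × L × ℕ))} (h : TreeIso T T') (h' : TreeIso T' T'') :
    TreeIso T T'' := by
  obtain ⟨f, hf⟩ := h
  obtain ⟨g, hg⟩ := h'
  exact ⟨f.trans g, fun a u v => (hf a u v).trans (hg a (f u) (f v))⟩

lemma map_nil (hT' : IsTree T') (f : {u // u ∈ T} ≃ {u // u ∈ T'}) (hf : SucPres f)
    (h0 : [] ∈ T) : (f ⟨[], h0⟩).1 = [] := by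
  rcases List.eq_nil_or_concat (f ⟨[], h0⟩).1 with h | ⟨p, z, hp⟩
  · exact h
  · exfalso
    rw [List.concat_eq_append] at hp
    have hpT : p ∈ T' := hT' p _ (f ⟨[], h0⟩).2 (by rw [hp]; exact ⟨[z], rfl⟩)
    have hsuc : SucA z.2.1 (f.symm ⟨p, hpT⟩).1 (⟨[], h0⟩ : {u // u ∈ T}).1 :=
      (hf z.2.1 (f.symm ⟨p, hpT⟩) ⟨[], h0⟩).mpr
        (by rw [f.apply_symm_apply]; exact ⟨z, rfl, hp⟩)
    exact not_sucA_nil hsuc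

lemma map_concat (f : {u // u ∈ T} ≃ {u // u ∈ T'}) (hf : SucPres f)
    {u : List (ℕ × L × ℕ)} {z : ℕ × L × ℕ} (hu : u ∈ T) (huz : u ++ [z] ∈ T) :
    ∃ z', z'.2.1 = z.2.1 ∧ (f ⟨u ++ [z], huz⟩).1 = (f ⟨u, hu⟩).1 ++ [z'] :=
  (hf z.2.1 ⟨u, hu⟩ ⟨u ++ [z], huz⟩).mp ⟨z, rfl, rfl⟩

lemma map_cone (hT : IsTree T) (f : {u // u ∈ T} ≃ {u // u ∈ T'}) (hf : SucPres f)
    {x y : ℕ × L × ℕ} (hx : [x] ∈ T) (hy : (f ⟨[x], hx⟩).1 = [y]) :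
    ∀ (t : List (ℕ × L × ℕ)) (h : x :: t ∈ T), ∃ t', (f ⟨x :: t, h⟩).1 = y :: t' := by
  intro t
  induction t using List.reverseRecOn with
  | nil =>
    intro h
    exact ⟨[], hy⟩
  | append_singleton s z ih =>
    intro h
    have hs : x :: s ∈ T := hT _ _ h ⟨[z], by simp⟩
    obtain ⟨t', ht'⟩ := ih hs
    obtain ⟨z', _, hz'⟩ := map_concat f hf hs (show (x :: s) ++ [z] ∈ T from h)
    refine ⟨t' ++ [z'], ?_⟩
    show (f ⟨(x :: s) ++ [z], h⟩).1 = y :: (t' ++ [z'])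
    rw [hz', ht']
    simp

lemma sect_iso (hT : IsTree T) (hT' : IsTree T') (f : {u // u ∈ T} ≃ {u // u ∈ T'})
    (hf : SucPres f) {x : ℕ × L × ℕ} (hx : [x] ∈ T) :
    ∃ (y : ℕ × L × ℕ) (_ : [y] ∈ T'), y.2.1 = x.2.1 ∧ (f ⟨[x], hx⟩).1 = [y] ∧
      TreeIso (sect T x) (sect T' y) := by
  have h0 : [] ∈ T := hT.nil_mem hx
  have h0' : (f ⟨[], h0⟩).1 = [] := map_nil hT' f hf h0
  obtain ⟨y, hylab, hy⟩ := map_concat f hf h0 (show [] ++ [x] ∈ T from hx)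
  rw [h0'] at hy
  have hfx : (f ⟨[x], hx⟩).1 = [y] := hy
  have hyT' : [y] ∈ T' := by rw [← hfx]; exact (f ⟨[x], hx⟩).2
  refine ⟨y, hyT', hylab, hfx, ?_⟩
  have cone := map_cone hT f hf hx hfx
  choose Fv hFv using cone
  have FmemB : ∀ t : {t // t ∈ sect T x}, Fv t.1 t.2 ∈ sect T' y := by
    intro t
    have h2 := hFv t.1 t.2
    show y :: Fv t.1 t.2 ∈ T'
    rw [← h2]
    exact (f ⟨x :: t.1, t.2⟩).2
  set F : {t // t ∈ sect T x} → {t // t ∈ sect T' y} :=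
    fun t => ⟨Fv t.1 t.2, FmemB t⟩ with hFdef
  have hF : ∀ t : {t // t ∈ sect T x}, (f ⟨x :: t.1, t.2⟩).1 = y :: (F t).1 :=
    fun t => hFv t.1 t.2
  have Finj : Function.Injective F := by
    intro t₁ t₂ h
    have h1 : f ⟨x :: t₁.1, t₁.2⟩ = f ⟨x :: t₂.1, t₂.2⟩ := by
      apply Subtype.ext
      rw [hF t₁, hF t₂, h]
    have h2 := f.injective h1
    have h3 := congrArg Subtype.val h2
    injection h3 with _ h4
    exact Subtype.ext h4
  have Fsurj : Function.Surjective F := by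
    have hfs := sucPres_symm f hf
    have hsx : (f.symm ⟨[y], hyT'⟩).1 = [x] := by
      have he : f.symm ⟨[y], hyT'⟩ = ⟨[x], hx⟩ := f.symm_apply_eq.mpr (Subtype.ext hfx.symm)
      rw [he]
    have cone' := map_cone hT' f.symm hfs hyT' hsx
    intro t'
    obtain ⟨s, hs⟩ := cone' t'.1 t'.2
    have hsT : x :: s ∈ T := by rw [← hs]; exact (f.symm ⟨y :: t'.1, t'.2⟩).2
    refine ⟨⟨s, hsT⟩, ?_⟩
    apply Subtype.ext
    have h1 : f ⟨x :: s, hsT⟩ = ⟨y :: t'.1, t'.2⟩ := by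
      have he : (⟨x :: s, hsT⟩ : {u // u ∈ T}) = f.symm ⟨y :: t'.1, t'.2⟩ := Subtype.ext hs.symm
      rw [he, f.apply_symm_apply]
    have h2 := hF ⟨s, hsT⟩
    rw [h1] at h2
    injection h2 with _ h3
    exact h3.symm
  refine ⟨Equiv.ofBijective F ⟨Finj, Fsurj⟩, ?_⟩
  intro a u v
  show SucA a u.1 v.1 ↔ SucA a (F u).1 (F v).1
  have step1 : SucA a u.1 v.1 ↔ SucA a (x :: u.1) (x :: v.1) := by
    rw [sucA_cons_cons]; simp
  have step2 : SucA a (x :: u.1) (x :: v.1)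
      ↔ SucA a (f ⟨x :: u.1, u.2⟩).1 (f ⟨x :: v.1, v.2⟩).1 := hf a ⟨x :: u.1, u.2⟩ ⟨x :: v.1, v.2⟩
  have step3 : SucA a (f ⟨x :: u.1, u.2⟩).1 (f ⟨x :: v.1, v.2⟩).1
      ↔ SucA a (y :: (F u).1) (y :: (F v).1) := by rw [hF u, hF v]
  have step4 : SucA a (y :: (F u).1) (y :: (F v).1) ↔ SucA a (F u).1 (F v).1 := by
    rw [sucA_cons_cons]; simp
  exact ((step1.trans step2).trans step3).trans step4

lemma treeRank_le_of_iso (hT : IsTree T) (hT' : IsTree T') (hW : IsWFTree T) (hW' : IsWFTree T')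
    (f : {u // u ∈ T} ≃ {u // u ∈ T'}) (hf : SucPres f) : treeRank T' ≤ treeRank T := by
  have key : ∀ s : List (ℕ × L × ℕ), Acc (treeRel T) s →
      ∀ hs : s ∈ T, nodeRank T' (f ⟨s, hs⟩).1 ≤ nodeRank T s := by
    intro s hacc
    induction hacc with
    | intro s _ ih =>
      intro hs
      rw [nodeRank_children hT' hW' (f ⟨s, hs⟩).1, nodeRank_children hT hW s]
      apply Ordinal.iSup_le
      intro z'
      set w : {u // u ∈ T'} := ⟨(f ⟨s, hs⟩).1 ++ [z'.1], z'.2⟩ with hw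
      have h1 : SucA z'.1.2.1 (f ⟨s, hs⟩).1 (f (f.symm w)).1 := by
        rw [f.apply_symm_apply]
        exact ⟨z'.1, rfl, rfl⟩
      have h2 : SucA z'.1.2.1 s (f.symm w).1 := (hf _ _ _).mpr h1
      obtain ⟨z, hzl, hzv⟩ := h2
      have hmem : s ++ [z] ∈ T := by rw [← hzv]; exact (f.symm w).2
      have hrel : treeRel T (f.symm w).1 s :=
        ⟨(f.symm w).2, ⟨[z], hzv.symm⟩, by rw [hzv]; simp⟩
      have hih : nodeRank T' (f (f.symm w)).1 ≤ nodeRank T (f.symm w).1 :=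
        ih _ hrel (f.symm w).2
      rw [f.apply_symm_apply] at hih
      have hih2 : nodeRank T' ((f ⟨s, hs⟩).1 ++ [z'.1]) ≤ nodeRank T (s ++ [z]) := by
        rw [← hzv]; exact hih
      exact le_trans (Order.succ_le_succ hih2) (Ordinal.le_iSup
        (fun z : {z // s ++ [z] ∈ T} => Order.succ (nodeRank T (s ++ [z.1]))) ⟨z, hmem⟩)
  apply Ordinal.iSup_le
  intro s'
  have h := key (f.symm ⟨s'.1, s'.2⟩).1 (treeRel_acc hT hW _) (f.symm ⟨s'.1, s'.2⟩).2
  have h' : nodeRank T' s'.1 ≤ nodeRank T (f.symm ⟨s'.1, s'.2⟩).1 := by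
    have he : f (f.symm ⟨s'.1, s'.2⟩) = ⟨s'.1, s'.2⟩ := f.apply_symm_apply _
    calc nodeRank T' s'.1 = nodeRank T' (f (f.symm ⟨s'.1, s'.2⟩)).1 := by rw [he]
    _ ≤ _ := h
  exact (Order.succ_le_succ h').trans (succ_nodeRank_le_treeRank (f.symm ⟨s'.1, s'.2⟩).2)

lemma treeRank_eq_of_iso (hT : IsTree T) (hT' : IsTree T') (hW : IsWFTree T) (hW' : IsWFTree T')
    (h : TreeIso T T') : treeRank T = treeRank T' := by
  obtain ⟨f, hf⟩ := h
  exact le_antisymm (treeRank_le_of_iso hT' hT hW' hW f.symm (sucPres_symm f hf))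
    (treeRank_le_of_iso hT hT' hW hW' f hf)

end IsoLemmas

section GlueLemmas

variable {L : Type} {T T' : Set (List (ℕ × L × ℕ))}

def glueF (hT : IsTree T) (h0' : [] ∈ T')
    (σ : {x : ℕ × L × ℕ // [x] ∈ T} ≃ {y : ℕ × L × ℕ // [y] ∈ T'})
    (g : ∀ x : {x : ℕ × L × ℕ // [x] ∈ T},
      {t // t ∈ sect T x.1} ≃ {t // t ∈ sect T' (σ x).1}) :
    {u // u ∈ T} → {u // u ∈ T'}
  | ⟨[], _⟩ => ⟨[], h0'⟩
  | ⟨x :: t, h⟩ =>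
    ⟨(σ ⟨x, hT [x] (x :: t) h ⟨t, rfl⟩⟩).1 :: ((g ⟨x, hT [x] (x :: t) h ⟨t, rfl⟩⟩) ⟨t, h⟩).1,
      ((g ⟨x, hT [x] (x :: t) h ⟨t, rfl⟩⟩) ⟨t, h⟩).2⟩

lemma glueF_nil_val (hT : IsTree T) (h0' : [] ∈ T')
    (σ : {x : ℕ × L × ℕ // [x] ∈ T} ≃ {y : ℕ × L × ℕ // [y] ∈ T'})
    (g : ∀ x : {x : ℕ × L × ℕ // [x] ∈ T},
      {t // t ∈ sect T x.1} ≃ {t // t ∈ sect T' (σ x).1})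
    (h : [] ∈ T) : (glueF hT h0' σ g ⟨[], h⟩).1 = [] := rfl

lemma glueF_cons_val (hT : IsTree T) (h0' : [] ∈ T')
    (σ : {x : ℕ × L × ℕ // [x] ∈ T} ≃ {y : ℕ × L × ℕ // [y] ∈ T'})
    (g : ∀ x : {x : ℕ × L × ℕ // [x] ∈ T},
      {t // t ∈ sect T x.1} ≃ {t // t ∈ sect T' (σ x).1})
    {x : ℕ × L × ℕ} {t : List (ℕ × L × ℕ)} (h : x :: t ∈ T) :
    (glueF hT h0' σ g ⟨x :: t, h⟩).1
      = (σ ⟨x, hT [x] (x :: t) h ⟨t, rfl⟩⟩).1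
        :: ((g ⟨x, hT [x] (x :: t) h ⟨t, rfl⟩⟩) ⟨t, h⟩).1 := rfl

lemma glue (hT : IsTree T) (hT' : IsTree T') (h0 : [] ∈ T) (h0' : [] ∈ T')
    (σ : {x : ℕ × L × ℕ // [x] ∈ T} ≃ {y : ℕ × L × ℕ // [y] ∈ T'})
    (hlab : ∀ x, (σ x).1.2.1 = x.1.2.1)
    (g : ∀ x : {x : ℕ × L × ℕ // [x] ∈ T},
      {t // t ∈ sect T x.1} ≃ {t // t ∈ sect T' (σ x).1})
    (hg : ∀ x, SucPres (g x)) : TreeIso T T' := by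
  have hg0 : ∀ x : {x : ℕ × L × ℕ // [x] ∈ T}, ((g x) ⟨[], x.2⟩).1 = [] := fun x =>
    map_nil (isTree_sect hT' (σ x).1) (g x) (hg x) (x.2 : [] ∈ sect T x.1)
  have Finj : Function.Injective (glueF hT h0' σ g) := by
    rintro ⟨lu, hu⟩ ⟨lv, hv⟩ huv
    have h1 := congrArg Subtype.val huv
    cases lu with
    | nil =>
      cases lv with
      | nil => rfl
      | cons y t =>
        exfalso
        rw [glueF_nil_val, glueF_cons_val] at h1
        exact (List.cons_ne_nil _ _) h1.symm
    | cons x s =>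
      cases lv with
      | nil =>
        exfalso
        rw [glueF_nil_val, glueF_cons_val] at h1
        exact (List.cons_ne_nil _ _) h1
      | cons y t =>
        rw [glueF_cons_val, glueF_cons_val] at h1
        injection h1 with hhead htail
        have hxy : x = y :=
          congrArg Subtype.val (σ.injective (Subtype.ext hhead))
        subst hxy
        apply Subtype.ext
        show x :: s = x :: t
        congr 1
        have h2 := (g ⟨x, hT [x] (x :: s) hu ⟨s, rfl⟩⟩).injective
          (Subtype.ext (show ((g ⟨x, hT [x] (x :: s) hu ⟨s, rfl⟩⟩) ⟨s, hu⟩).1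
            = ((g ⟨x, hT [x] (x :: s) hu ⟨s, rfl⟩⟩) ⟨t, hv⟩).1 from htail))
        exact congrArg Subtype.val h2
  have Fsurj : Function.Surjective (glueF hT h0' σ g) := by
    rintro ⟨lv, hv⟩
    cases lv with
    | nil => exact ⟨⟨[], h0⟩, Subtype.ext rfl⟩
    | cons y t =>
      have hy : [y] ∈ T' := hT' [y] (y :: t) hv ⟨t, rfl⟩
      set x0 : {x : ℕ × L × ℕ // [x] ∈ T} := σ.symm ⟨y, hy⟩ with hx0
      have hk : σ x0 = ⟨y, hy⟩ := σ.apply_symm_apply _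
      have htm : t ∈ sect T' (σ x0).1 := by rw [hk]; exact hv
      set s : {t // t ∈ sect T x0.1} := (g x0).symm ⟨t, htm⟩ with hsd
      have hmem : x0.1 :: s.1 ∈ T := s.2
      refine ⟨⟨x0.1 :: s.1, hmem⟩, ?_⟩
      apply Subtype.ext
      rw [glueF_cons_val]
      show (σ x0).1 :: ((g x0) s).1 = y :: t
      have h3 : (g x0) s = ⟨t, htm⟩ := by rw [hsd]; exact (g x0).apply_symm_apply _
      have h3' : ((g x0) s).1 = t := congrArg Subtype.val h3
      rw [h3']
      show (σ x0).1 :: t = y :: t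
      rw [congrArg Subtype.val hk]
  refine ⟨Equiv.ofBijective (glueF hT h0' σ g) ⟨Finj, Fsurj⟩, ?_⟩
  intro a u v
  show SucA a u.1 v.1 ↔ SucA a (glueF hT h0' σ g u).1 (glueF hT h0' σ g v).1
  obtain ⟨lu, hu⟩ := u
  obtain ⟨lv, hv⟩ := v
  cases lu with
  | nil =>
    cases lv with
    | nil => exact iff_of_false not_sucA_nil not_sucA_nil
    | cons y t =>
      show SucA a [] (y :: t) ↔ _
      rw [glueF_nil_val, glueF_cons_val, sucA_nil_cons, sucA_nil_cons,
        hlab ⟨y, hT [y] (y :: t) hv ⟨t, rfl⟩⟩]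
      constructor
      · rintro ⟨hl, rfl⟩
        exact ⟨hl, hg0 _⟩
      · rintro ⟨hl, h2⟩
        refine ⟨hl, ?_⟩
        have h3 := (g ⟨y, hT [y] (y :: t) hv ⟨t, rfl⟩⟩).injective
          (Subtype.ext (h2.trans (hg0 ⟨y, hT [y] (y :: t) hv ⟨t, rfl⟩⟩).symm))
        exact congrArg Subtype.val h3
  | cons x s =>
    cases lv with
    | nil => exact iff_of_false not_sucA_nil not_sucA_nil
    | cons y t =>
      show SucA a (x :: s) (y :: t) ↔ _
      rw [glueF_cons_val, glueF_cons_val, sucA_cons_cons, sucA_cons_cons]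
      constructor
      · rintro ⟨rfl, hst⟩
        exact ⟨rfl, ((hg ⟨y, hT [y] (y :: s) hu ⟨s, rfl⟩⟩) a ⟨s, hu⟩ ⟨t, hv⟩).mp hst⟩
      · rintro ⟨hhead, hsuc⟩
        have hyx : y = x :=
          congrArg Subtype.val (σ.injective (Subtype.ext hhead))
        subst hyx
        exact ⟨rfl, ((hg ⟨y, hT [y] (y :: s) hu ⟨s, rfl⟩⟩) a ⟨s, hu⟩ ⟨t, hv⟩).mpr hsuc⟩

end GlueLemmas

section Matching

lemma card_le_of_fin_maps {A B : Type} [Countable A] (SA : Set A) (SB : Set B)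
    (h : ∀ k : ℕ, ∀ u : Fin k → A, Function.Injective u → (∀ i, u i ∈ SA) →
        ∃ v : Fin k → B, Function.Injective v ∧ ∀ i, v i ∈ SB) :
    Cardinal.mk SA ≤ Cardinal.mk SB := by
  have hA : Cardinal.mk SA ≤ Cardinal.aleph0 := Cardinal.mk_le_aleph0
  have key : ∀ k : ℕ, (k : Cardinal) ≤ Cardinal.mk SA → (k : Cardinal) ≤ Cardinal.mk SB := by
    intro k hk
    rw [← Cardinal.mk_fin k] at hk
    obtain ⟨e⟩ := (Cardinal.le_def _ _).mp hk
    obtain ⟨v, hvi, hvB⟩ := h k (fun i => (e i).1)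
      (fun i j hij => e.injective (Subtype.ext hij)) (fun i => (e i).2)
    rw [← Cardinal.mk_fin k]
    exact (Cardinal.le_def _ _).mpr ⟨⟨fun i => ⟨v i, hvB i⟩,
      fun i j hij => hvi (congrArg Subtype.val hij)⟩⟩
  rcases lt_or_eq_of_le hA with h1 | h1
  · obtain ⟨n, hn⟩ := Cardinal.lt_aleph0.mp h1
    rw [hn]
    exact key n (le_of_eq hn.symm)
  · rw [h1]
    exact Cardinal.aleph0_le.mpr fun n => key n (by rw [h1]; exact (Cardinal.nat_lt_aleph0 n).le)

lemma exists_matching {A B : Type} [Countable A] [Countable B] (R : A → B → Prop)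
    (hdiff : ∀ x x' y y', R x y → R x' y → R x' y' → R x y')
    (hforth : ∀ k : ℕ, ∀ u : Fin k → A, Function.Injective u →
        ∃ v : Fin k → B, Function.Injective v ∧ ∀ i, R (u i) (v i))
    (hback : ∀ k : ℕ, ∀ v : Fin k → B, Function.Injective v →
        ∃ u : Fin k → A, Function.Injective u ∧ ∀ i, R (u i) (v i)) :
    ∃ σ : A ≃ B, ∀ a, R a (σ a) := by
  classical
  have hrefl : ∀ a : A, ∃ b, R a b := by
    intro a
    obtain ⟨v, _, hv⟩ := hforth 1 (fun _ => a) (fun i j _ => Subsingleton.elim i j)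
    exact ⟨v 0, hv 0⟩
  let E : A → A → Prop := fun a a' => ∃ b, R a b ∧ R a' b
  have hE : Equivalence E := by
    constructor
    · intro a; obtain ⟨b, hb⟩ := hrefl a; exact ⟨b, hb, hb⟩
    · rintro a a' ⟨b, h1, h2⟩; exact ⟨b, h2, h1⟩
    · rintro a a' a'' ⟨b, h1, h2⟩ ⟨b', h3, h4⟩
      exact ⟨b', hdiff a a' b b' h1 h2 h3, h4⟩
  have fact1 : ∀ a a' b, E a a' → (R a b ↔ R a' b) := by
    rintro a a' b ⟨b0, h1, h2⟩
    constructor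
    · intro h; exact hdiff a' a b0 b h2 h1 h
    · intro h; exact hdiff a a' b0 b h1 h2 h
  letI S : Setoid A := ⟨E, hE⟩
  let ASet : Quotient S → Set A := fun q => {a | E q.out a}
  let BSet : Quotient S → Set B := fun q => {b | R q.out b}
  have hcard : ∀ q, Cardinal.mk (ASet q) = Cardinal.mk (BSet q) := by
    intro q
    apply le_antisymm
    · apply card_le_of_fin_maps
      intro k u hui huA
      obtain ⟨v, hvi, hv⟩ := hforth k u hui
      exact ⟨v, hvi, fun i => (fact1 (u i) q.out (v i) (hE.symm (huA i))).mp (hv i)⟩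
    · apply card_le_of_fin_maps
      intro k v hvi hvB
      obtain ⟨u, hui, hu⟩ := hback k v hvi
      exact ⟨u, hui, fun i => ⟨v i, hvB i, hu i⟩⟩
  have bij : ∀ q, Nonempty (↥(ASet q) ≃ ↥(BSet q)) := fun q => Cardinal.eq.mp (hcard q)
  let e : ∀ q, ↥(ASet q) ≃ ↥(BSet q) := fun q => (bij q).some
  have hmemA : ∀ a : A, a ∈ ASet ⟦a⟧ := fun a => Quotient.mk_out a
  let σf : A → B := fun a => (e ⟦a⟧ ⟨a, hmemA a⟩).1
  have hσR : ∀ a, R a (σf a) := by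
    intro a
    have h1 : R (⟦a⟧ : Quotient S).out (σf a) := (e ⟦a⟧ ⟨a, hmemA a⟩).2
    exact (fact1 _ _ _ (Quotient.mk_out a)).mp h1
  have hσcongr : ∀ (q : Quotient S) (a : A) (hm : a ∈ ASet q),
      (⟦a⟧ : Quotient S) = q → σf a = (e q ⟨a, hm⟩).1 := by
    intro q a hm hq
    subst hq
    rfl
  have hinj : Function.Injective σf := by
    intro a a' h
    have hq : (⟦a⟧ : Quotient S) = ⟦a'⟧ := by
      apply Quotient.out_equiv_out.mp
      refine ⟨σf a, (e ⟦a⟧ ⟨a, hmemA a⟩).2, ?_⟩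
      rw [h]
      exact (e ⟦a'⟧ ⟨a', hmemA a'⟩).2
    have hm : a' ∈ ASet ⟦a⟧ := by rw [hq]; exact hmemA a'
    have h2 : σf a' = (e ⟦a⟧ ⟨a', hm⟩).1 := hσcongr ⟦a⟧ a' hm hq.symm
    have h3 : (e ⟦a⟧ ⟨a, hmemA a⟩) = (e ⟦a⟧ ⟨a', hm⟩) :=
      Subtype.ext (h.trans h2)
    have h4 := (e ⟦a⟧).injective h3
    exact congrArg Subtype.val h4
  have hsurj : Function.Surjective σf := by
    intro b
    obtain ⟨u, _, hu⟩ := hback 1 (fun _ => b) (fun i j _ => Subsingleton.elim i j)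
    have hRb : R (u 0) b := hu 0
    have hmB : b ∈ BSet ⟦u 0⟧ := (fact1 _ _ b (Quotient.mk_out (u 0))).mpr hRb
    obtain ⟨c, hc⟩ := (e ⟦u 0⟧).surjective ⟨b, hmB⟩
    refine ⟨c.1, ?_⟩
    have hq : (⟦c.1⟧ : Quotient S) = ⟦u 0⟧ := by
      apply Quotient.sound
      exact hE.trans (hE.symm c.2) (Quotient.mk_out (u 0))
    have h2 : σf c.1 = (e ⟦u 0⟧ ⟨c.1, c.2⟩).1 := hσcongr ⟦u 0⟧ c.1 c.2 hq
    rw [h2]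
    have h3 : (⟨c.1, c.2⟩ : {a // a ∈ ASet ⟦u 0⟧}) = c := rfl
    rw [h3, hc]
  exact ⟨Equiv.ofBijective σf ⟨hinj, hsurj⟩, hσR⟩

end Matching

section Main

variable {L : Type}

lemma exists_equivA_sect {T T' : Set (List (ℕ × L × ℕ))} {α : Ordinal}
    (hTt : IsTree T) (hTt' : IsTree T') (hW : IsWFTree T) (hW' : IsWFTree T')
    (hrk : treeRank T = α) {x y : ℕ × L × ℕ} (hx : [x] ∈ T)
    (hiso : TreeIso (sect T x) (sect T' y)) :
    ∃ β < α, EquivA β (sect T x) (sect T' y) :=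
  ⟨treeRank (sect T x), by rw [← hrk]; exact treeRank_sect_lt hTt hW hx,
    isWFTree_sect hTt hW x, isWFTree_sect hTt' hW' y, rfl,
    (treeRank_eq_of_iso (isTree_sect hTt x) (isTree_sect hTt' y)
      (isWFTree_sect hTt hW x) (isWFTree_sect hTt' hW' y) hiso).symm, hiso⟩

/-- for `α ≥ 2` and trees `T, T'` over `M = ℕ × L × ℕ` of rank
exactly `α`, `T ≡_α T'` iff for every `k ≥ 1` both `forth^α_k(T,T')` and
`back^α_k(T,T')` hold. -/
theorem equivA_iff_back_forth {L : Type} [Countable L]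
    (α : Ordinal) (hα : 2 ≤ α) (T T' : Set (List (ℕ × L × ℕ)))
    (hTt : IsTree T) (hTt' : IsTree T')
    (hT : IsWFTree T ∧ treeRank T = α) (hT' : IsWFTree T' ∧ treeRank T' = α) :
    EquivA α T T' ↔ ∀ k : ℕ, 1 ≤ k → Forth α k T T' ∧ Back α k T T' := by
  obtain ⟨hWT, hrkT⟩ := hT
  obtain ⟨hWT', hrkT'⟩ := hT'
  constructor
  · rintro ⟨-, -, -, -, f, hf⟩ k _
    constructor
    · refine ⟨⟨hWT, hrkT⟩, ?_⟩
      intro u hinj hu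
      have hs := fun i => sect_iso hTt hTt' f hf (hu i)
      choose y hyT hylab hfy hiso using hs
      refine ⟨y, ?_, hyT, fun i => (hylab i).symm, ?_⟩
      · intro i j hij
        apply hinj
        have h1 : f ⟨[u i], hu i⟩ = f ⟨[u j], hu j⟩ :=
          Subtype.ext (by rw [hfy i, hfy j, hij])
        have h2 := congrArg Subtype.val (f.injective h1)
        simpa using h2
      · intro i
        exact exists_equivA_sect hTt hTt' hWT hWT' hrkT (hu i) (hiso i)
    · refine ⟨⟨hWT', hrkT'⟩, ?_⟩
      intro u' hinj hu'
      have hfs := sucPres_symm f hf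
      have hs := fun i => sect_iso hTt' hTt f.symm hfs (hu' i)
      choose x hxT hxlab hfx hiso using hs
      refine ⟨x, ?_, hxT, fun i => hxlab i, ?_⟩
      · intro i j hij
        apply hinj
        have h1 : f.symm ⟨[u' i], hu' i⟩ = f.symm ⟨[u' j], hu' j⟩ :=
          Subtype.ext (by rw [hfx i, hfx j, hij])
        have h2 := congrArg Subtype.val (f.symm.injective h1)
        simpa using h2
      · intro i
        exact exists_equivA_sect hTt hTt' hWT hWT' hrkT (hxT i) (treeIso_symm (hiso i))
  · intro h
    refine ⟨hWT, hWT', hrkT, hrkT', ?_⟩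
    have hpos : (0 : Ordinal) < α := lt_of_lt_of_le (by norm_num) hα
    have h0 : [] ∈ T := nil_mem_of_treeRank_ne_zero hTt (by rw [hrkT]; exact hpos.ne')
    have h0' : [] ∈ T' := nil_mem_of_treeRank_ne_zero hTt' (by rw [hrkT']; exact hpos.ne')
    let R : {x : ℕ × L × ℕ // [x] ∈ T} → {y : ℕ × L × ℕ // [y] ∈ T'} → Prop :=
      fun x y => x.1.2.1 = y.1.2.1 ∧ treeRank (sect T x.1) = treeRank (sect T' y.1) ∧
        TreeIso (sect T x.1) (sect T' y.1)
    have hdiff : ∀ x x' y y', R x y → R x' y → R x' y' → R x y' := by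
      rintro x x' y y' ⟨l1, r1, i1⟩ ⟨l2, r2, i2⟩ ⟨l3, r3, i3⟩
      refine ⟨by rw [l1, ← l2, l3], by rw [r1, ← r2, r3], ?_⟩
      exact treeIso_trans (treeIso_trans i1 (treeIso_symm i2)) i3
    have hforth : ∀ k : ℕ, ∀ u : Fin k → {x : ℕ × L × ℕ // [x] ∈ T}, Function.Injective u →
        ∃ v : Fin k → {y : ℕ × L × ℕ // [y] ∈ T'}, Function.Injective v ∧
          ∀ i, R (u i) (v i) := by
      intro k u hui
      rcases Nat.eq_zero_or_pos k with rfl | hk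
      · exact ⟨fun i => i.elim0, fun i => i.elim0, fun i => i.elim0⟩
      · obtain ⟨u', hinj', hmem', hlab', hequiv'⟩ := (h k hk).1.2 (fun i => (u i).1)
          (fun i j hij => hui (Subtype.ext hij)) (fun i => (u i).2)
        refine ⟨fun i => ⟨u' i, hmem' i⟩,
          fun i j hij => hinj' (congrArg Subtype.val hij), ?_⟩
        intro i
        obtain ⟨β, -, -, -, e3, e4, e5⟩ := hequiv' i
        exact ⟨hlab' i, e3.trans e4.symm, e5⟩
    have hback : ∀ k : ℕ, ∀ v : Fin k → {y : ℕ × L × ℕ // [y] ∈ T'}, Function.Injective v →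
        ∃ u : Fin k → {x : ℕ × L × ℕ // [x] ∈ T}, Function.Injective u ∧
          ∀ i, R (u i) (v i) := by
      intro k v hvi
      rcases Nat.eq_zero_or_pos k with rfl | hk
      · exact ⟨fun i => i.elim0, fun i => i.elim0, fun i => i.elim0⟩
      · obtain ⟨w, hinj', hmem', hlab', hequiv'⟩ := (h k hk).2.2 (fun i => (v i).1)
          (fun i j hij => hvi (Subtype.ext hij)) (fun i => (v i).2)
        refine ⟨fun i => ⟨w i, hmem' i⟩,
          fun i j hij => hinj' (congrArg Subtype.val hij), ?_⟩
        intro i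
        obtain ⟨β, -, -, -, e3, e4, e5⟩ := hequiv' i
        exact ⟨hlab' i, e3.trans e4.symm, e5⟩
    obtain ⟨σ, hσ⟩ := exists_matching R hdiff hforth hback
    choose g hg using fun x => (hσ x).2.2
    exact glue hTt hTt' h0 h0' σ (fun x => ((hσ x).1).symm) g hg

end Main
end
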